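/- arXiv:2501.04115 — 9 statements merged into one kernel-verified Lean document; each statement's English description precedes it below -/
import Mathlib

section
/- Let q be a prime power, r a positive integer, and B(X) a polynomial with coefficients in F_{q^2}. Then X^r · B(X^{q-1}) permutes F_{q^2} if and only if gcd(r, q-1) = 1 and the map x ↦ x^r · B(x)^{q-1} permutes the set μ_{q+1} of (q+1)-th roots of unity in F_{q^2}. -/
/-!
Write `f x = x ^ r * B(x ^ s)` and `g y = y ^ r * B(y) ^ s`, where `s * t = |F| - 1`.
The map `x ↦ x ^ s` sends `Fˣ` onto `μ_t`, its fibres are the cosets of `μ_s`, and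
`f(x) ^ s = g(x ^ s)`. So `f` is injective exactly when it is injective on each coset of `μ_s`
(which, since `f(c x) = c ^ r f(x)` for `c ∈ μ_s`, means `gcd(r, s) = 1`) and the induced map `g`
on the quotient `μ_t` is injective.
-/

open Function Polynomial

theorem IsCyclic.exists_pow_eq_of_pow_eq_one {G : Type*} [Group G] [IsCyclic G] [Finite G]
    {s t : ℕ} (hst : Nat.card G = s * t) {y : G} (hy : y ^ t = 1) : ∃ x : G, x ^ s = y := by
  obtain ⟨ζ, hζ⟩ := IsCyclic.exists_generator (α := G)
  obtain ⟨m, rfl⟩ := mem_powers_iff_mem_zpowers.mpr (hζ y)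
  have ht : 0 < t := Nat.pos_of_mul_pos_left (hst ▸ Nat.card_pos)
  have hsm : s ∣ m := by
    refine Nat.dvd_of_mul_dvd_mul_right ht ?_
    rw [← hst, ← orderOf_eq_card_of_forall_mem_zpowers hζ]
    exact orderOf_dvd_of_pow_eq_one (by rwa [pow_mul])
  obtain ⟨k, rfl⟩ := hsm
  exact ⟨ζ ^ k, by rw [← pow_mul, mul_comm]⟩

section FiniteField

variable {F : Type*} [Field F] [Fintype F] {r s t : ℕ}

theorem FiniteField.card_sub_one_ne_zero : Fintype.card F - 1 ≠ 0 := by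
  have := Fintype.one_lt_card (α := F)
  omega

theorem pow_pow_eq_one_of_mul_eq_card_sub_one (hst : s * t = Fintype.card F - 1) {x : F}
    (hx : x ≠ 0) : (x ^ s) ^ t = 1 := by
  rw [← pow_mul, hst, FiniteField.pow_card_sub_one_eq_one x hx]

theorem exists_pow_eq_of_pow_eq_one_of_mul_eq_card_sub_one (hst : s * t = Fintype.card F - 1)
    {y : F} (hy : y ^ t = 1) : ∃ x : F, x ≠ 0 ∧ x ^ s = y := by
  have ht : t ≠ 0 := right_ne_zero_of_mul (hst ▸ FiniteField.card_sub_one_ne_zero)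
  obtain ⟨u, rfl⟩ := IsUnit.of_pow_eq_one hy ht
  have hcard : Nat.card Fˣ = s * t := by
    rw [Nat.card_units, Nat.card_eq_fintype_card, hst]
  obtain ⟨x, hx⟩ := IsCyclic.exists_pow_eq_of_pow_eq_one hcard (Units.ext (by simpa using hy))
  exact ⟨x, x.ne_zero, by rw [← hx, Units.val_pow_eq_pow_val]⟩

variable (B : F[X])

theorem coprime_of_bijective_pow_mul_eval_pow (hs : s ∣ Fintype.card F - 1)
    (hf : Bijective fun x : F => x ^ r * B.eval (x ^ s)) : r.Coprime s := by
  by_contra hrs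
  obtain ⟨p, hp, hpr, hps⟩ := Nat.Prime.not_coprime_iff_dvd.mp hrs
  have := Fact.mk hp
  obtain ⟨c, hc⟩ := exists_prime_orderOf_dvd_card' (G := Fˣ) p
    (by rw [Nat.card_units, Nat.card_eq_fintype_card]; exact hps.trans hs)
  have hcr : (c : F) ^ r = 1 := by
    rw [← Units.val_pow_eq_pow_val, orderOf_dvd_iff_pow_eq_one.mp (hc ▸ hpr), Units.val_one]
  have hcs : (c : F) ^ s = 1 := by
    rw [← Units.val_pow_eq_pow_val, orderOf_dvd_iff_pow_eq_one.mp (hc ▸ hps), Units.val_one]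
  have hc1 : (c : F) = 1 := hf.injective (by simp only [hcr, hcs, one_pow])
  exact hp.one_lt.ne' (hc ▸ orderOf_eq_one_iff.mpr (Units.ext hc1))

theorem bijOn_pow_mul_eval_pow_of_bijective (hst : s * t = Fintype.card F - 1) (hr : r ≠ 0)
    (hf : Bijective fun x : F => x ^ r * B.eval (x ^ s)) :
    Set.BijOn (fun y : F => y ^ r * B.eval y ^ s) {y | y ^ t = 1} {y | y ^ t = 1} := by
  set f := fun x : F => x ^ r * B.eval (x ^ s)
  have hf0 : f 0 = 0 := by simp [f, hr]
  have hcomm : ∀ x, f x ^ s = (x ^ s) ^ r * B.eval (x ^ s) ^ s := fun x => by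
    rw [mul_pow, pow_right_comm]
  have hmaps : Set.MapsTo (fun y : F => y ^ r * B.eval y ^ s) {y | y ^ t = 1} {y | y ^ t = 1} := by
    intro y hy
    obtain ⟨x, hx, rfl⟩ := exists_pow_eq_of_pow_eq_one_of_mul_eq_card_sub_one hst hy
    simp only [Set.mem_ofPred_eq, ← hcomm]
    exact pow_pow_eq_one_of_mul_eq_card_sub_one hst (hf0 ▸ hf.injective.ne hx)
  refine (Set.toFinite _).surjOn_iff_bijOn_of_mapsTo hmaps |>.mp fun y hy => ?_
  obtain ⟨u, hu, rfl⟩ := exists_pow_eq_of_pow_eq_one_of_mul_eq_card_sub_one hst hy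
  obtain ⟨v, rfl⟩ := hf.surjective u
  have hv : v ≠ 0 := by rintro rfl; exact hu hf0
  exact ⟨v ^ s, pow_pow_eq_one_of_mul_eq_card_sub_one hst hv, (hcomm v).symm⟩

theorem injective_pow_mul_eval_pow_of_bijOn (hst : s * t = Fintype.card F - 1) (hr : r ≠ 0)
    (hrs : r.Coprime s)
    (hg : Set.BijOn (fun y : F => y ^ r * B.eval y ^ s) {y | y ^ t = 1} {y | y ^ t = 1}) :
    Injective fun x : F => x ^ r * B.eval (x ^ s) := by
  have hs : s ≠ 0 := left_ne_zero_of_mul (hst ▸ FiniteField.card_sub_one_ne_zero)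
  have ht : t ≠ 0 := right_ne_zero_of_mul (hst ▸ FiniteField.card_sub_one_ne_zero)
  have hμ : ∀ {x : F}, x ≠ 0 → x ^ s ∈ {y : F | y ^ t = 1} :=
    pow_pow_eq_one_of_mul_eq_card_sub_one hst
  -- `g` maps `μ_t` into `μ_t`, which does not contain `0`
  have hB : ∀ {x : F}, x ≠ 0 → B.eval (x ^ s) ≠ 0 := fun hx hB => by
    simpa [hB, hs, ht] using hg.mapsTo (hμ hx)
  have hf : ∀ {x : F}, x ≠ 0 → x ^ r * B.eval (x ^ s) ≠ 0 := fun hx =>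
    mul_ne_zero (pow_ne_zero r hx) (hB hx)
  intro x y hxy
  simp only at hxy
  rcases eq_or_ne x 0 with rfl | hx <;> rcases eq_or_ne y 0 with rfl | hy
  · rfl
  · exact absurd (by simpa [hr] using hxy.symm) (hf hy)
  · exact absurd (by simpa [hr] using hxy) (hf hx)
  have hxys : x ^ s = y ^ s := hg.injOn (hμ hx) (hμ hy) <| by
    simp only [← mul_pow, pow_right_comm _ s r, hxy]
  have hxyr : x ^ r = y ^ r := by
    rw [hxys] at hxy
    exact mul_right_cancel₀ (hB hy) hxy
  rw [← div_eq_one_iff_eq hy, ← pow_eq_one_iff_of_coprime hrs, div_pow, div_pow, hxyr, hxys,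
    div_self (pow_ne_zero _ hy), div_self (pow_ne_zero _ hy)]
  exact ⟨rfl, rfl⟩

theorem bijective_pow_mul_eval_pow_iff (hst : s * t = Fintype.card F - 1) (hr : r ≠ 0) :
    Bijective (fun x : F => x ^ r * B.eval (x ^ s)) ↔
      r.Coprime s ∧
        Set.BijOn (fun y : F => y ^ r * B.eval y ^ s) {y | y ^ t = 1} {y | y ^ t = 1} :=
  ⟨fun hf => ⟨coprime_of_bijective_pow_mul_eval_pow B (Dvd.intro t hst) hf,
      bijOn_pow_mul_eval_pow_of_bijective B hst hr hf⟩,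
    fun ⟨hrs, hg⟩ => Finite.injective_iff_bijective.mp
      (injective_pow_mul_eval_pow_of_bijOn B hst hr hrs hg)⟩

end FiniteField

theorem stmt0_general (q : ℕ)
    (F : Type*) [Field F] [Fintype F] (hF : Fintype.card F = q ^ 2)
    (r : ℕ) (hr : 0 < r) (B : Polynomial F) :
    Function.Bijective (fun x : F => x ^ r * B.eval (x ^ (q - 1))) ↔
      (Nat.gcd r (q - 1) = 1 ∧
        Set.BijOn (fun x : F => x ^ r * (B.eval x) ^ (q - 1))
          {x : F | x ^ (q + 1) = 1} {x : F | x ^ (q + 1) = 1}) :=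
  bijective_pow_mul_eval_pow_iff B (by rw [hF, mul_comm, ← Nat.sq_sub_sq, one_pow]) hr.ne'

/-- `X^r B(X^{q-1})` permutes `F_{q^2}` iff `gcd(r,q-1)=1` and
`x ↦ x^r B(x)^{q-1}` permutes `μ_{q+1}`. -/
theorem stmt0 (q : ℕ) (hq : ∃ p k : ℕ, p.Prime ∧ 0 < k ∧ q = p ^ k)
    (F : Type*) [Field F] [Fintype F] (hF : Fintype.card F = q ^ 2)
    (r : ℕ) (hr : 0 < r) (B : Polynomial F) :
    Function.Bijective (fun x : F => x ^ r * B.eval (x ^ (q - 1))) ↔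
      (Nat.gcd r (q - 1) = 1 ∧
        Set.BijOn (fun x : F => x ^ r * (B.eval x) ^ (q - 1))
          {x : F | x ^ (q + 1) = 1} {x : F | x ^ (q + 1) = 1}) :=
  stmt0_general q F hF r hr B
end

section
/- Let q be a prime power and α, β ∈ F_{q^2} with α^{q+1} ≠ β^{q+1}. Then the map x ↦ (β^q x + α^q)/(α x + β) permutes the set μ_{q+1} of (q+1)-th roots of unity in F_{q^2}. (In particular, α x + β is nonzero for all x in μ_{q+1}.) -/
/-- if `α^{q+1} ≠ β^{q+1}` then `x ↦ (β^q x + α^q)/(α x + β)`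
permutes `μ_{q+1}`, and `α x + β ≠ 0` on `μ_{q+1}`. -/
theorem stmt1 (q : ℕ) (hq : ∃ p k : ℕ, p.Prime ∧ 0 < k ∧ q = p ^ k)
    (F : Type*) [Field F] [Fintype F] (hF : Fintype.card F = q ^ 2)
    (α β : F) (h : α ^ (q + 1) ≠ β ^ (q + 1)) :
    Set.BijOn (fun x : F => (β ^ q * x + α ^ q) / (α * x + β))
        {x : F | x ^ (q + 1) = 1} {x : F | x ^ (q + 1) = 1} ∧
      ∀ x : F, x ^ (q + 1) = 1 → α * x + β ≠ 0 := by
  obtain ⟨p, k, hp, hk, rfl⟩ := hq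
  set q := p ^ k with hqdef
  haveI : Fact p.Prime := ⟨hp⟩
  have hq0 : q ≠ 0 := pow_ne_zero _ hp.pos.ne'
  -- characteristic p
  have hcard : (Fintype.card F : F) = 0 := FiniteField.cast_card_eq_zero F
  have hpF : (p : F) = 0 := by
    rw [hF] at hcard
    push_cast at hcard
    have h1 : (q : F) = 0 := pow_eq_zero_iff (n := 2) (by norm_num) |>.mp hcard
    have : ((p : F)) ^ k = 0 := by push_cast at h1 ⊢; exact_mod_cast h1
    exact pow_eq_zero_iff hk.ne' |>.mp this
  haveI hcharp : CharP F p := by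
    have hr : ringChar F ∣ p := ringChar.dvd hpF
    have hr1 : ringChar F ≠ 1 := CharP.ringChar_ne_one
    have : ringChar F = p := ((Nat.Prime.eq_one_or_self_of_dvd hp _ hr).resolve_left hr1)
    rw [← this]; exact ringChar.charP F
  -- frobenius facts
  have hadd : ∀ a b : F, (a + b) ^ q = a ^ q + b ^ q := fun a b => add_pow_char_pow ..
  have hsub : ∀ a b : F, (a - b) ^ q = a ^ q - b ^ q := fun a b => sub_pow_char_pow ..
  have hinjq : ∀ a b : F, a ^ q = b ^ q → a = b := by
    intro a b hab
    have : (a - b) ^ q = 0 := by rw [hsub]; rw [hab]; ring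
    exact sub_eq_zero.mp (pow_eq_zero_iff hq0 |>.mp this)
  have hq2 : ∀ a : F, (a ^ q) ^ q = a := by
    intro a
    rw [← pow_mul, ← sq, ← hF]
    exact FiniteField.pow_card a
  have hneg1 : (-1 : F) ^ (q + 1) = 1 := by
    have hm : (-1 : F) ^ q = -1 := by
      have h0 := hsub 0 1
      rw [zero_sub, zero_pow hq0, one_pow, zero_sub] at h0
      exact h0
    rw [pow_succ, hm]; ring
  have hnegpow : ∀ a : F, (-a : F) ^ (q + 1) = a ^ (q + 1) := by
    intro a
    calc (-a) ^ (q + 1) = (-1 : F) ^ (q + 1) * a ^ (q + 1) := by rw [← mul_pow]; ring_nf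
    _ = a ^ (q + 1) := by rw [hneg1, one_mul]
  -- denominator nonzero
  have hden : ∀ x : F, x ^ (q + 1) = 1 → α * x + β ≠ 0 := by
    intro x hx hc
    have hb : β = -(α * x) := by linear_combination hc
    apply h
    rw [hb, hnegpow, mul_pow, hx, mul_one]
  -- numerator nonzero
  have hnum : ∀ x : F, x ^ (q + 1) = 1 → β ^ q * x + α ^ q ≠ 0 := by
    intro x hx hc
    have ha : α ^ q = -(β ^ q * x) := by linear_combination hc
    apply h
    apply hinjq
    calc (α ^ (q + 1)) ^ q = (α ^ q) ^ (q + 1) := by rw [← pow_mul, ← pow_mul, Nat.mul_comm]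
      _ = (β ^ q * x) ^ (q + 1) := by rw [ha, hnegpow]
      _ = (β ^ q) ^ (q + 1) * x ^ (q + 1) := mul_pow ..
      _ = (β ^ (q + 1)) ^ q := by rw [hx, mul_one, ← pow_mul, ← pow_mul, Nat.mul_comm]
  -- maps to
  have hmaps : Set.MapsTo (fun x : F => (β ^ q * x + α ^ q) / (α * x + β))
      {x : F | x ^ (q + 1) = 1} {x : F | x ^ (q + 1) = 1} := by
    intro x hx
    simp only [Set.mem_setOf_eq] at hx ⊢
    have hd := hden x hx
    rw [div_pow]
    have hnd : (β ^ q * x + α ^ q) ^ (q + 1) = (α * x + β) ^ (q + 1) := by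
      have e1 : (β ^ q * x + α ^ q) ^ q = β * x ^ q + α := by
        rw [hadd, mul_pow, hq2, hq2]
      have e2 : (α * x + β) ^ q = α ^ q * x ^ q + β ^ q := by
        rw [hadd, mul_pow]
      rw [pow_succ, pow_succ, e1, e2]
      have hxx : x ^ q * x = 1 := by rw [← pow_succ]; exact hx
      linear_combination (β ^ q * β - α ^ q * α) * hxx
    rw [hnd]
    exact div_self (pow_ne_zero _ hd)
  -- injective
  have hinj : Set.InjOn (fun x : F => (β ^ q * x + α ^ q) / (α * x + β))
      {x : F | x ^ (q + 1) = 1} := by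
    intro x hx y hy hxy
    simp only [Set.mem_setOf_eq] at hx hy
    have hdx := hden x hx
    have hdy := hden y hy
    simp only at hxy
    rw [div_eq_div_iff hdx hdy] at hxy
    have key : (β ^ (q + 1) - α ^ (q + 1)) * (x - y) = 0 := by
      linear_combination hxy
    rcases mul_eq_zero.mp key with h1 | h1
    · exact absurd (sub_eq_zero.mp h1).symm h
    · exact sub_eq_zero.mp h1
  refine ⟨(Set.Finite.injOn_iff_bijOn_of_mapsTo (Set.toFinite _) hmaps).mp hinj, hden⟩
end

section
/- Let q be a prime power, α ∈ F_{q^2} \ F_q, and β ∈ μ_{q+1}. Then the map x ↦ (α x + β α^q)/(x + β) maps μ_{q+1} bijectively onto P^1(F_q) = F_q ∪ {∞}, where the value is ∞ precisely when x + β = 0. -/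
/-- if `α ∉ F_q` and `β ∈ μ_{q+1}` then `x ↦ (αx + βα^q)/(x+β)`
maps `μ_{q+1}` bijectively onto `P^1(F_q) = F_q ∪ {∞}`, with value `∞`
exactly when `x + β = 0`. Here `P^1(F_q)` is modeled as `Option F` with
`none = ∞` and `some` values ranging over `F_q = {x : F | x^q = x}`. -/
theorem stmt2 (q : ℕ) (hq : ∃ p k : ℕ, p.Prime ∧ 0 < k ∧ q = p ^ k)
    (F : Type*) [Field F] [Fintype F] [DecidableEq F] (hF : Fintype.card F = q ^ 2)
    (α β : F) (hα : α ^ q ≠ α) (hβ : β ^ (q + 1) = 1) :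
    Set.BijOn
      (fun x : F =>
        if x + β = 0 then (none : Option F)
        else some ((α * x + β * α ^ q) / (x + β)))
      {x : F | x ^ (q + 1) = 1}
      (insert (none : Option F) (Option.some '' {x : F | x ^ q = x})) := by
  obtain ⟨p, k, hp, hk, rfl⟩ := hq
  haveI hfp : Fact p.Prime := ⟨hp⟩
  have hchar : CharP F p := by
    have h := ringChar.charP F
    have hp' : (ringChar F).Prime := CharP.char_is_prime F _
    obtain ⟨n, -, hcard⟩ := FiniteField.card F (ringChar F)
    rw [hF, ← pow_mul] at hcard
    have hdvd : ringChar F ∣ p ^ (k * 2) := by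
      rw [hcard]; exact dvd_pow_self _ n.pos.ne'
    have heq : ringChar F = p :=
      (Nat.prime_dvd_prime_iff_eq hp' hp).mp (hp'.dvd_of_dvd_pow hdvd)
    rwa [heq] at h
  haveI := hchar
  set q := p ^ k with hq'
  -- basic Frobenius facts
  have fadd : ∀ a b : F, (a + b) ^ q = a ^ q + b ^ q := by
    intro a b; rw [hq']; exact add_pow_char_pow a b p k
  have fsub : ∀ a b : F, (a - b) ^ q = a ^ q - b ^ q := by
    intro a b; rw [hq']; exact sub_pow_char_pow a b k
  have hqq : ∀ a : F, (a ^ q) ^ q = a := by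
    intro a
    have h := FiniteField.pow_card a
    rwa [hF, pow_two, pow_mul] at h
  have hβ0 : β ≠ 0 := by
    rintro rfl
    rw [zero_pow (Nat.succ_ne_zero q)] at hβ
    exact zero_ne_one hβ
  have hββ : β ^ q * β = 1 := by rw [← pow_succ]; exact hβ
  have hαα : α - α ^ q ≠ 0 := sub_ne_zero.mpr (Ne.symm hα)
  constructor
  · -- MapsTo
    intro x hx
    simp only [Set.mem_setOf_eq] at hx
    have hxx : x ^ q * x = 1 := by rw [← pow_succ]; exact hx
    by_cases h : x + β = 0
    · simp only [h, if_pos rfl]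
      exact Set.mem_insert _ _
    · simp only [if_neg h]
      refine Set.mem_insert_of_mem _ ⟨(α * x + β * α ^ q) / (x + β), ?_, rfl⟩
      simp only [Set.mem_setOf_eq]
      have hden : x ^ q + β ^ q ≠ 0 := by
        have := pow_ne_zero q h
        rwa [fadd] at this
      rw [div_pow, fadd, mul_pow, mul_pow, hqq, fadd, div_eq_div_iff hden h]
      linear_combination (α ^ q - α) * hxx + (α - α ^ q) * hββ
  constructor
  · -- InjOn
    intro x hx y hy heq
    simp only at heq
    by_cases h1 : x + β = 0 <;> by_cases h2 : y + β = 0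
    · linear_combination h1 - h2
    · rw [if_pos h1, if_neg h2] at heq; exact absurd heq (by simp)
    · rw [if_neg h1, if_pos h2] at heq; exact absurd heq (by simp)
    · rw [if_neg h1, if_neg h2, Option.some.injEq] at heq
      have hd := heq
      rw [div_eq_div_iff h1 h2] at hd
      have hz : β * (α - α ^ q) * (x - y) = 0 := by linear_combination hd
      rcases mul_eq_zero.mp hz with h | h
      · exact absurd h (mul_ne_zero hβ0 hαα)
      · exact sub_eq_zero.mp h
  · -- SurjOn
    intro y hy
    rcases hy with rfl | ⟨c, hc, rfl⟩
    · -- y = none, witness x = -β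
      have hneg1 : ((-1 : F)) ^ (q + 1) = 1 := by
        rcases eq_or_ne p 2 with h2 | h2
        · have h0 : (2 : F) = 0 := by
            have := CharP.cast_eq_zero F p
            rw [h2] at this; exact_mod_cast this
          have : (-1 : F) = 1 := by linear_combination -h0
          rw [this, one_pow]
        · have hoddq : Odd q := (hp.odd_of_ne_two h2).pow
          exact hoddq.add_one.neg_one_pow
      refine ⟨-β, ?_, ?_⟩
      · simp only [Set.mem_setOf_eq]
        rw [neg_pow, hneg1, one_mul, hβ]
      · simp
    · -- y = some c with c^q = c
      simp only [Set.mem_setOf_eq] at hc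
      have hac : α - c ≠ 0 := by
        intro h
        apply hα
        have h' : α = c := sub_eq_zero.mp h
        rw [h', hc]
      have haqc : α ^ q - c ≠ 0 := by
        intro h
        apply hα
        have h' : α ^ q = c := sub_eq_zero.mp h
        have : α = c := by
          have := hqq α
          rw [h', hc] at this
          exact this.symm
        rw [this, hc, ← h', this]
      set x : F := β * (c - α ^ q) / (α - c) with hxdef
      have hx_q : x ^ q = β ^ q * (c - α) / (α ^ q - c) := by
        rw [hxdef, div_pow, mul_pow, fsub, fsub, hqq, hc]
      have hxβ : x + β ≠ 0 := by
        have hform : x + β = β * (α - α ^ q) / (α - c) := by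
          rw [hxdef]; field_simp; ring
        rw [hform]
        exact div_ne_zero (mul_ne_zero hβ0 hαα) hac
      refine ⟨x, ?_, ?_⟩
      · simp only [Set.mem_setOf_eq]
        rw [pow_succ, hx_q, hxdef]
        field_simp
        linear_combination ((c - α) * (c - α ^ q)) * hββ
      · simp only [if_neg hxβ, Option.some.injEq]
        rw [div_eq_iff hxβ, hxdef]
        field_simp
        ring
end

section
/- Let q be a prime power with gcd(3,q) = 1 and q ≡ 2 (mod 3), and let ω ∈ F_{q^2} be an element of multiplicative order 3. Then the map x ↦ (x + ω)/(ω x + 1) maps the set μ_{q+1} of (q+1)-th roots of unity in F_{q^2} bijectively onto P^1(F_q) = F_q ∪ {∞}, where the value is ∞ precisely when ω x + 1 = 0. -/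
/-- if `gcd(3,q)=1`, `q ≡ 2 (mod 3)` and `ω` has order `3`, then
`x ↦ (x+ω)/(ωx+1)` maps `μ_{q+1}` bijectively onto `P^1(F_q) = F_q ∪ {∞}`,
with value `∞` exactly when `ωx + 1 = 0`. Here `P^1(F_q)` is modeled as
`Option F` with `none = ∞` and `some` values in `F_q = {x : F | x^q = x}`. -/
theorem stmt4 (q : ℕ) (hq : ∃ p k : ℕ, p.Prime ∧ 0 < k ∧ q = p ^ k)
    (h3 : Nat.gcd 3 q = 1) (hq3 : q % 3 = 2)
    (F : Type*) [Field F] [Fintype F] [DecidableEq F] (hF : Fintype.card F = q ^ 2)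
    (ω : F) (hω : orderOf ω = 3) :
    Set.BijOn
      (fun x : F =>
        if ω * x + 1 = 0 then (none : Option F)
        else some ((x + ω) / (ω * x + 1)))
      {x : F | x ^ (q + 1) = 1}
      (insert (none : Option F) (Option.some '' {x : F | x ^ q = x})) := by
  obtain ⟨p, k, hp, hk, hqk⟩ := hq
  have hq0 : q ≠ 0 := by rw [hqk]; exact (pow_pos hp.pos k).ne'
  haveI hfact := Fact.mk hp
  have hchar : CharP F p := by
    obtain ⟨p', hp'inst⟩ := CharP.exists F
    haveI := hp'inst
    obtain ⟨n, hp'prime, hcard⟩ := FiniteField.card F p'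
    have hpe : p = p' := by
      have hdvd : p ∣ p' ^ (n : ℕ) := by
        rw [← hcard, hF, hqk, ← pow_mul]
        exact dvd_pow (dvd_refl p) (by positivity)
      exact (Nat.prime_dvd_prime_iff_eq hp hp'prime).mp (hp.dvd_of_dvd_pow hdvd)
    rwa [hpe]
  have hfrob : ∀ a b : F, (a + b) ^ q = a ^ q + b ^ q := by
    intro a b; rw [hqk]; exact add_pow_char_pow a b p k
  have hneg : ∀ a : F, (-a) ^ q = -(a ^ q) := by
    intro a
    have h := hfrob a (-a)
    rw [add_neg_cancel, zero_pow hq0] at h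
    exact eq_neg_of_add_eq_zero_right h.symm
  have hsub : ∀ a b : F, (a - b) ^ q = a ^ q - b ^ q := by
    intro a b
    rw [sub_eq_add_neg, hfrob, hneg, ← sub_eq_add_neg]
  have hω3 : ω ^ 3 = 1 := by rw [← hω]; exact pow_orderOf_eq_one ω
  have hω1 : ω ≠ 1 := by intro h; rw [h, orderOf_one] at hω; omega
  have hωne0 : ω ≠ 0 := by
    intro h; rw [h] at hω3; simp at hω3
  have hω2ne1 : ω ^ 2 ≠ 1 := by
    intro h
    have := orderOf_dvd_of_pow_eq_one h
    rw [hω] at this; omega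
  have hωq : ω ^ q = ω ^ 2 := by
    rw [← pow_mod_orderOf, hω, hq3]
  constructor
  · -- MapsTo
    intro x hx
    simp only [Set.mem_setOf_eq] at hx
    have hxq : x ^ q * x = 1 := by rw [← pow_succ]; exact hx
    by_cases hd : ω * x + 1 = 0
    · simp [hd]
    · simp only [if_neg hd, Set.mem_insert_iff]
      right
      refine ⟨_, ?_, rfl⟩
      simp only [Set.mem_setOf_eq]
      have hden : (ω * x + 1) ^ q = ω ^ 2 * x ^ q + 1 := by
        rw [hfrob, mul_pow, hωq, one_pow]
      have hdenne : ω ^ 2 * x ^ q + 1 ≠ 0 := hden ▸ pow_ne_zero q hd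
      rw [div_pow, hfrob, hωq, hden, div_eq_div_iff hdenne hd]
      linear_combination (ω - ω ^ 2) * hxq + (x - x ^ q) * hω3
  constructor
  · -- InjOn
    intro x hx y hy hfxy
    simp only at hfxy
    by_cases hdx : ω * x + 1 = 0 <;> by_cases hdy : ω * y + 1 = 0
    · have h : ω * x = ω * y := by linear_combination hdx - hdy
      exact mul_left_cancel₀ hωne0 h
    · simp [hdx, hdy] at hfxy
    · simp [hdx, hdy] at hfxy
    · rw [if_neg hdx, if_neg hdy, Option.some.injEq, div_eq_div_iff hdx hdy] at hfxy
      have h2 : (1 - ω ^ 2) * (x - y) = 0 := by linear_combination hfxy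
      rcases mul_eq_zero.mp h2 with h | h
      · exact absurd (by linear_combination -h) hω2ne1
      · exact sub_eq_zero.mp h
  · -- SurjOn
    intro b hb
    rcases hb with rfl | ⟨y, hy, rfl⟩
    · refine ⟨-ω ^ 2, ?_, ?_⟩
      · show (-ω ^ 2) ^ (q + 1) = 1
        have h1 : (-ω ^ 2) ^ q = -ω := by
          rw [hneg, ← pow_mul, mul_comm, pow_mul, hωq, ← pow_mul]
          norm_num
          linear_combination ω * hω3
        rw [pow_succ, h1]
        linear_combination hω3
      · show (if ω * (-ω ^ 2) + 1 = 0 then (none : Option F) else _) = none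
        have h0 : ω * (-ω ^ 2) + 1 = 0 := by linear_combination -hω3
        rw [if_pos h0]
    · simp only [Set.mem_setOf_eq] at hy
      have hd0 : ω * y - 1 ≠ 0 := by
        intro h
        have h1 : ω * y = 1 := by linear_combination h
        have h2 : ω ^ 2 * y = 1 := by
          have h2' : (ω * y) ^ q = 1 ^ q := by rw [h1]
          rwa [mul_pow, hωq, hy, one_pow] at h2'
        have hy0 : y ≠ 0 := by
          intro h'; rw [h', mul_zero] at h1; exact zero_ne_one h1
        have h4 : ω * y * (ω - 1) = 0 := by linear_combination h2 - h1
        rcases mul_eq_zero.mp h4 with h' | h'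
        · exact (mul_ne_zero hωne0 hy0) h'
        · exact (sub_ne_zero.mpr hω1) h'
      have hnum : (ω - y) ^ q = ω ^ 2 - y := by rw [hsub, hωq, hy]
      have hden : (ω * y - 1) ^ q = ω ^ 2 * y - 1 := by
        rw [hsub, mul_pow, hωq, hy, one_pow]
      have hdenne : ω ^ 2 * y - 1 ≠ 0 := hden ▸ pow_ne_zero q hd0
      set x : F := (ω - y) / (ω * y - 1) with hxdef
      have hdne : ω * x + 1 = (ω ^ 2 - 1) / (ω * y - 1) := by
        rw [hxdef]; field_simp; ring
      have hdne' : ω * x + 1 ≠ 0 := by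
        rw [hdne]
        exact div_ne_zero (sub_ne_zero.mpr hω2ne1) hd0
      refine ⟨x, ?_, ?_⟩
      · simp only [Set.mem_setOf_eq]
        rw [pow_succ, hxdef, div_pow, hnum, hden, div_mul_div_comm,
          div_eq_one_iff_eq (mul_ne_zero hdenne hd0)]
        linear_combination (1 - y ^ 2) * hω3
      · show (if ω * x + 1 = 0 then (none : Option F) else some ((x + ω) / (ω * x + 1))) = some y
        rw [if_neg hdne', Option.some.injEq, div_eq_iff hdne', hxdef]
        field_simp
        ring
end

section
/- Let p be a prime with p ≠ 3 and q = p^k for a positive integer k. Define f(X) = X^3 · (X^{3(q-1)} - 3·X^{q-1} + 1) ∈ F_q[X] (i.e., B(X) = X^3 - 3X + 1, which is the case Q = R = S = 1 of Table 1, row σ=(1,1,1), B_1). Let e ∈ {1,-1} satisfy q ≡ e (mod 3). Then f permutes F_{q^2} if and only if gcd(3, q-1) = 1 and gcd(3, q+e) = 1. -/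
section Aux

variable {F : Type*} [Field F]

/-- Key cube identity: if `ζ² = ζ - 1` and `A(u)B(v) = A(v)B(u)` then
`((u-ζ)(v-ζ̄))³ = ((u-ζ̄)(v-ζ))³` where `ζ̄ = 1 - ζ`. -/
lemma stmt10_cube_key (ζ u v : F) (hζ : ζ ^ 2 = ζ - 1)
    (hAB : (u ^ 3 - 3 * u ^ 2 + 1) * (v ^ 3 - 3 * v + 1)
      = (v ^ 3 - 3 * v ^ 2 + 1) * (u ^ 3 - 3 * u + 1)) :
    ((u - ζ) * (v - (1 - ζ))) ^ 3 = ((u - (1 - ζ)) * (v - ζ)) ^ 3 := by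
  linear_combination (2 * ζ - 1) * hAB +
    (-3*v + 3*v*ζ + 9*v*ζ^2 - 6*v*ζ^3 + 3*v^2 - 6*v^2*ζ + v^3 - 2*v^3*ζ
      + 3*u - 3*u*ζ - 9*u*ζ^2 + 6*u*ζ^3 - 9*u*v^2 + 18*u*v^2*ζ - 3*u^2 + 6*u^2*ζ
      + 9*u^2*v - 18*u^2*v*ζ - u^3 + 2*u^3*ζ) * hζ

lemma stmt10_conj_key (ζ u v : F) (hζ : ζ ^ 2 = ζ - 1) :
    (1 - (1 - ζ) * u) * (1 - ζ * v) * ((u - (1 - ζ)) * (v - ζ))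
      = ((u - ζ) * (v - (1 - ζ))) * ((1 - ζ * u) * (1 - (1 - ζ) * v)) := by
  linear_combination ((2 * ζ - 1) * (u - v) * (u * v - 1)) * hζ

end Aux

/-- for `p ≠ 3` prime and `q = p^k`, the polynomial
`f(X) = X^3 (X^{3(q-1)} - 3 X^{q-1} + 1)` permutes `F_{q^2}` iff
`gcd(3, q-1) = 1` and `gcd(3, q+e) = 1`, where `e ∈ {1,-1}` with
`q ≡ e (mod 3)`. -/
theorem stmt10 (p k q : ℕ) (hp : p.Prime) (hp3 : p ≠ 3) (hk : 0 < k)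
    (hq : q = p ^ k)
    (F : Type*) [Field F] [Fintype F] (hF : Fintype.card F = q ^ 2)
    (e : ℤ) (he : e = 1 ∨ e = -1) (hqe : (q : ℤ) % 3 = e % 3) :
    Function.Bijective
        (fun x : F => x ^ 3 * ((x ^ (q - 1)) ^ 3 - 3 * x ^ (q - 1) + 1)) ↔
      (Nat.gcd 3 (q - 1) = 1 ∧ Int.gcd 3 ((q : ℤ) + e) = 1) := by
  classical
  have hq2 : 2 ≤ q := by
    rw [hq]
    calc 2 ≤ p := hp.two_le
    _ ≤ p ^ k := Nat.le_self_pow hk.ne' p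
  -- the characteristic of F is p
  haveI hpF : Fact p.Prime := ⟨hp⟩
  have hcharP : CharP F p := by
    haveI h1 : CharP F (ringChar F) := ringChar.charP F
    obtain ⟨n, hn, hcard⟩ := FiniteField.card F (ringChar F)
    have hdvd : ringChar F ∣ p ^ (2 * k) := by
      have h2 : ringChar F ∣ ringChar F ^ (n : ℕ) := dvd_pow_self _ n.pos.ne'
      have h3 : ringChar F ^ (n : ℕ) = p ^ (2 * k) := by
        rw [← hcard, hF, hq, ← pow_mul, mul_comm k 2]
      rwa [h3] at h2
    have : ringChar F = p :=
      (Nat.prime_dvd_prime_iff_eq hn hp).mp (hn.dvd_of_dvd_pow hdvd)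
    rwa [this] at h1
  haveI := hcharP
  -- Frobenius
  have hφ : ∀ x : F, iterateFrobenius F p k x = x ^ q := fun x => by
    rw [iterateFrobenius_def, ← hq]
  -- q is not divisible by 3
  have hq30 : ¬ (3 ∣ q) := by
    intro h
    rw [hq] at h
    have := (Nat.prime_dvd_prime_iff_eq Nat.prime_three hp).mp
      (Nat.prime_three.dvd_of_dvd_pow h)
    exact hp3 this.symm
  have hq23 : q ^ 2 % 3 = 1 := by
    rw [Nat.pow_mod]
    have : q % 3 = 1 ∨ q % 3 = 2 := by omega
    rcases this with h | h <;> rw [h] <;> norm_num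
  -- an element of order 3 in Fˣ (Cauchy)
  have hcardu : Fintype.card Fˣ = q ^ 2 - 1 := by rw [Fintype.card_units, hF]
  haveI : Fact (Nat.Prime 3) := ⟨Nat.prime_three⟩
  obtain ⟨c, hc⟩ := exists_prime_orderOf_dvd_card (G := Fˣ) 3 (by
    rw [hcardu]
    obtain ⟨Q, hQ⟩ : ∃ Q, Q = q ^ 2 := ⟨_, rfl⟩
    rw [← hQ]
    have : Q % 3 = 1 := by rw [hQ]; exact hq23
    omega)
  have hc3F : (c : F) ^ 3 = 1 := by
    have h := pow_orderOf_eq_one c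
    rw [hc] at h
    calc (c : F) ^ 3 = ((c ^ 3 : Fˣ) : F) := (Units.val_pow_eq_pow_val c 3).symm
    _ = 1 := by rw [h, Units.val_one]
  have hc1F : (c : F) ≠ 1 := by
    intro h
    have : c = 1 := Units.val_eq_one.mp h
    rw [this, orderOf_one] at hc
    omega
  rcases he with rfl | rfl
  · -- e = 1 : q ≡ 1 (mod 3), both sides false
    have hq31 : q % 3 = 1 := by omega
    have h31 : (3 : ℕ) ∣ q - 1 := by omega
    constructor
    · intro hbij
      exfalso
      have hcq : (c : F) ^ (q - 1) = 1 := by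
        obtain ⟨t, ht⟩ := h31
        rw [ht, pow_mul, hc3F, one_pow]
      have hfc : (c : F) ^ 3 * (((c : F) ^ (q - 1)) ^ 3 - 3 * (c : F) ^ (q - 1) + 1)
          = (1 : F) ^ 3 * (((1 : F) ^ (q - 1)) ^ 3 - 3 * (1 : F) ^ (q - 1) + 1) := by
        rw [hcq, hc3F, one_pow, one_pow]
        norm_num
      exact hc1F (hbij.injective hfc)
    · rintro ⟨hg1, -⟩
      exfalso
      have : (3 : ℕ) ∣ 1 := hg1 ▸ Nat.dvd_gcd dvd_rfl h31
      omega
  · -- e = -1 : q ≡ 2 (mod 3), both sides true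
    have hq32 : q % 3 = 2 := by omega
    have hnd : ¬ (3 : ℕ) ∣ (q - 1) := by omega
    have hgcd : Nat.gcd 3 (q - 1) = 1 :=
      (Nat.Prime.coprime_iff_not_dvd Nat.prime_three).mpr hnd
    have hint : Int.gcd 3 ((q : ℤ) + (-1)) = 1 := by
      have h1 : ((q : ℤ) + -1) = ((q - 1 : ℕ) : ℤ) := by push_cast; omega
      rw [h1, show ((3 : ℤ)) = ((3 : ℕ) : ℤ) by norm_num, Int.gcd_natCast_natCast]
      exact hgcd
    refine ⟨fun _ => ⟨hgcd, hint⟩, fun _ => ?_⟩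
    rw [← Finite.injective_iff_bijective]
    intro x y hxy
    simp only at hxy
    -- basic char facts
    have h3F : (3 : F) ≠ 0 := by
      rw [show (3 : F) = ((3 : ℕ) : F) by norm_num, Ne, CharP.cast_eq_zero_iff F p]
      intro h
      exact hp3 ((Nat.prime_dvd_prime_iff_eq hp Nat.prime_three).mp h)
    -- the sixth root of unity ζ with ζ² = ζ - 1
    have hcc : (c : F) ^ 2 + (c : F) + 1 = 0 := by
      have hfac : ((c : F) - 1) * ((c : F) ^ 2 + (c : F) + 1) = 0 := by
        linear_combination hc3F
      rcases mul_eq_zero.mp hfac with h | h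
      · exact absurd (by linear_combination h) hc1F
      · exact h
    obtain ⟨ζ, hζdef⟩ : ∃ z : F, z = -(c : F) := ⟨_, rfl⟩
    have hζ : ζ ^ 2 = ζ - 1 := by rw [hζdef]; linear_combination hcc
    have hcq2 : (c : F) ^ q = (c : F) ^ 2 := by
      have hqexp : q = 3 * (q / 3) + 2 := by omega
      calc (c : F) ^ q = (c : F) ^ (3 * (q / 3) + 2) := by rw [← hqexp]
      _ = (((c : F) ^ 3) ^ (q / 3)) * (c : F) ^ 2 := by rw [pow_add, pow_mul]
      _ = (c : F) ^ 2 := by rw [hc3F, one_pow, one_mul]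
    have hζq : ζ ^ q = 1 - ζ := by
      rw [← hφ ζ, hζdef, map_neg, hφ, hcq2]
      linear_combination -hcc
    have h2ζ : 2 * ζ - 1 ≠ 0 := by
      intro h
      exact h3F (by linear_combination (-(2 * ζ - 1)) * h + 4 * hζ)
    -- powers of nonzero elements
    have hee : (q - 1) * (q + 1) = q ^ 2 - 1 := by
      obtain ⟨m, hm⟩ : ∃ m, q = m + 2 := ⟨q - 2, by omega⟩
      subst hm
      have e1 : m + 2 - 1 = m + 1 := by omega
      rw [e1]
      have e2 : (m + 2) ^ 2 = (m + 1) * (m + 2 + 1) + 1 := by ring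
      rw [e2, Nat.add_sub_cancel]
    have hpow : ∀ w : F, w ≠ 0 → (w ^ (q - 1)) ^ (q + 1) = 1 := by
      intro w hw
      have hcard : w ^ (q ^ 2 - 1) = 1 := by
        have := FiniteField.pow_card_sub_one_eq_one w hw
        rwa [hF] at this
      rw [← pow_mul, hee, hcard]
    -- B has no roots on the circle
    have hBne' : ∀ w : F, w ^ (q + 1) = 1 → w ^ 3 - 3 * w + 1 ≠ 0 := by
      intro w hw hB0
      have hw0 : w ≠ 0 := by
        intro h
        rw [h, zero_pow (by omega : q + 1 ≠ 0)] at hw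
        exact zero_ne_one hw
      have hwq : w ^ q * w = 1 := by rw [← pow_succ]; exact hw
      have hBq : (w ^ q) ^ 3 - 3 * w ^ q + 1 = 0 := by
        have h := congrArg (iterateFrobenius F p k) hB0
        simp only [map_sub, map_add, map_pow, map_mul, map_one, map_ofNat, map_zero] at h
        simp only [hφ] at h
        exact h
      have hA0 : 1 - 3 * w ^ 2 + w ^ 3 = 0 := by
        linear_combination w ^ 3 * hBq + (3 * w ^ 2 - (w ^ q * w) ^ 2 - w ^ q * w - 1) * hwq
      have hw1 : w = 1 := by
        have h30 : 3 * w * (w - 1) = 0 := by linear_combination hB0 - hA0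
        rcases mul_eq_zero.mp h30 with h | h
        · rcases mul_eq_zero.mp h with h' | h'
          · exact absurd h' h3F
          · exact absurd h' hw0
        · exact sub_eq_zero.mp h
      rw [hw1] at hB0
      have : (1 : F) = 0 := by linear_combination -hB0
      exact one_ne_zero this
    -- zero cases
    by_cases hx0 : x = 0
    · rw [hx0] at hxy ⊢
      by_contra hy0
      have hy0' : y ≠ 0 := fun h => hy0 h.symm
      refine mul_ne_zero (pow_ne_zero 3 hy0') (hBne' _ (hpow y hy0')) ?_
      rw [← hxy, zero_pow three_ne_zero, zero_mul]
    by_cases hy0 : y = 0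
    · rw [hy0] at hxy ⊢
      by_contra hx0'
      refine mul_ne_zero (pow_ne_zero 3 hx0) (hBne' _ (hpow x hx0)) ?_
      rw [hxy, zero_pow three_ne_zero, zero_mul]
    -- main case
    set u := x ^ (q - 1) with hu
    set v := y ^ (q - 1) with hv
    have hu0 : u ≠ 0 := pow_ne_zero _ hx0
    have hv0 : v ≠ 0 := pow_ne_zero _ hy0
    have huq1 : u ^ (q + 1) = 1 := hpow x hx0
    have hvq1 : v ^ (q + 1) = 1 := hpow y hy0
    have hBu : u ^ 3 - 3 * u + 1 ≠ 0 := hBne' u huq1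
    have hBv : v ^ 3 - 3 * v + 1 ≠ 0 := hBne' v hvq1
    have h1 : x ^ 3 * (u ^ 3 - 3 * u + 1) = y ^ 3 * (v ^ 3 - 3 * v + 1) := hxy
    have huq : u ^ q * u = 1 := by rw [← pow_succ]; exact huq1
    have hvq : v ^ q * v = 1 := by rw [← pow_succ]; exact hvq1
    have hxq : x ^ q = u * x := by rw [hu, ← pow_succ, show q - 1 + 1 = q by omega]
    have hyq : y ^ q = v * y := by rw [hv, ← pow_succ, show q - 1 + 1 = q by omega]
    have h2 : (x ^ q) ^ 3 * ((u ^ q) ^ 3 - 3 * u ^ q + 1)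
        = (y ^ q) ^ 3 * ((v ^ q) ^ 3 - 3 * v ^ q + 1) := by
      have h := congrArg (iterateFrobenius F p k) h1
      simp only [map_mul, map_sub, map_add, map_pow, map_one, map_ofNat] at h
      simp only [hφ] at h
      exact h
    rw [hxq, hyq] at h2
    have h2' : x ^ 3 * (u ^ 3 - 3 * u ^ 2 + 1) = y ^ 3 * (v ^ 3 - 3 * v ^ 2 + 1) := by
      linear_combination h2 + x ^ 3 * (3 * u ^ 2 - (u ^ q * u) ^ 2 - u ^ q * u - 1) * huq
        - y ^ 3 * (3 * v ^ 2 - (v ^ q * v) ^ 2 - v ^ q * v - 1) * hvq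
    have hAB : (u ^ 3 - 3 * u ^ 2 + 1) * (v ^ 3 - 3 * v + 1)
        = (v ^ 3 - 3 * v ^ 2 + 1) * (u ^ 3 - 3 * u + 1) := by
      have h3 : (x ^ 3 * y ^ 3) * ((u ^ 3 - 3 * u ^ 2 + 1) * (v ^ 3 - 3 * v + 1))
          = (x ^ 3 * y ^ 3) * ((v ^ 3 - 3 * v ^ 2 + 1) * (u ^ 3 - 3 * u + 1)) := by
        linear_combination (y ^ 3 * (v ^ 3 - 3 * v + 1)) * h2'
          - (y ^ 3 * (v ^ 3 - 3 * v ^ 2 + 1)) * h1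
      exact mul_left_cancel₀ (mul_ne_zero (pow_ne_zero _ hx0) (pow_ne_zero _ hy0)) h3
    obtain ⟨a, ha⟩ : ∃ a : F, a = (u - ζ) * (v - (1 - ζ)) := ⟨_, rfl⟩
    obtain ⟨b, hb⟩ : ∃ b : F, b = (u - (1 - ζ)) * (v - ζ) := ⟨_, rfl⟩
    have hab : a ^ 3 = b ^ 3 := by rw [ha, hb]; exact stmt10_cube_key ζ u v hζ hAB
    have huv : u = v := by
      by_cases hbz : b = 0
      · have haz : a = 0 := by
          have h : a ^ 3 = 0 := by rw [hab, hbz, zero_pow three_ne_zero]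
          exact pow_eq_zero_iff three_ne_zero |>.mp h
        rw [hb] at hbz
        rw [ha] at haz
        rcases mul_eq_zero.mp hbz with h | h <;> rcases mul_eq_zero.mp haz with h' | h'
        · exact absurd (show 2 * ζ - 1 = 0 by linear_combination h - h') h2ζ
        · linear_combination h - h'
        · linear_combination h' - h
        · exact absurd (show 2 * ζ - 1 = 0 by linear_combination h' - h) h2ζ
      · have haz : a ≠ 0 := by
          intro h
          apply hbz
          have h' : b ^ 3 = 0 := by rw [← hab, h, zero_pow three_ne_zero]
          exact pow_eq_zero_iff three_ne_zero |>.mp h'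
        have e1 : a ^ q = (u ^ q - (1 - ζ)) * (v ^ q - ζ) := by
          rw [← hφ a, ha]
          simp only [map_mul, map_sub, map_one]
          simp only [hφ]
          rw [hζq]
          ring
        have e2 : b ^ q = (u ^ q - ζ) * (v ^ q - (1 - ζ)) := by
          rw [← hφ b, hb]
          simp only [map_mul, map_sub, map_one]
          simp only [hφ]
          rw [hζq]
          ring
        have uq_inv : u ^ q = u⁻¹ := eq_inv_of_mul_eq_one_left huq
        have vq_inv : v ^ q = v⁻¹ := eq_inv_of_mul_eq_one_left hvq
        have hua : u * (u⁻¹ - (1 - ζ)) = 1 - (1 - ζ) * u := by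
          rw [mul_sub, mul_inv_cancel₀ hu0]; ring
        have hva : v * (v⁻¹ - ζ) = 1 - ζ * v := by
          rw [mul_sub, mul_inv_cancel₀ hv0]; ring
        have hub : u * (u⁻¹ - ζ) = 1 - ζ * u := by
          rw [mul_sub, mul_inv_cancel₀ hu0]; ring
        have hvb : v * (v⁻¹ - (1 - ζ)) = 1 - (1 - ζ) * v := by
          rw [mul_sub, mul_inv_cancel₀ hv0]; ring
        have key : a ^ q * b = a * b ^ q := by
          rw [e1, e2, uq_inv, vq_inv]
          refine mul_left_cancel₀ (mul_ne_zero hu0 hv0) ?_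
          calc (u * v) * ((u⁻¹ - (1 - ζ)) * (v⁻¹ - ζ) * b)
              = (u * (u⁻¹ - (1 - ζ))) * (v * (v⁻¹ - ζ)) * b := by ring
            _ = (1 - (1 - ζ) * u) * (1 - ζ * v) * ((u - (1 - ζ)) * (v - ζ)) := by
                rw [hua, hva, hb]
            _ = ((u - ζ) * (v - (1 - ζ))) * ((1 - ζ * u) * (1 - (1 - ζ) * v)) :=
                stmt10_conj_key ζ u v hζ
            _ = a * ((u * (u⁻¹ - ζ)) * (v * (v⁻¹ - (1 - ζ)))) := by
                rw [hub, hvb, ha]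
            _ = (u * v) * (a * ((u⁻¹ - ζ) * (v⁻¹ - (1 - ζ)))) := by ring
        have hbq0 : b ^ q ≠ 0 := pow_ne_zero _ hbz
        obtain ⟨r, hr⟩ : ∃ r : F, r = a * b⁻¹ := ⟨_, rfl⟩
        have hrne : r ≠ 0 := by rw [hr]; exact mul_ne_zero haz (inv_ne_zero hbz)
        have hr3 : r ^ 3 = 1 := by
          rw [hr, mul_pow, inv_pow, hab, mul_inv_cancel₀ (pow_ne_zero _ hbz)]
        have hrq : r ^ q = r := by
          rw [hr, mul_pow, inv_pow]
          field_simp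
          linear_combination key
        have hrq1 : r ^ (q - 1) = 1 := by
          have h : r ^ (q - 1) * r = 1 * r := by
            rw [← pow_succ, show q - 1 + 1 = q by omega, hrq, one_mul]
          exact mul_right_cancel₀ hrne h
        have hr1 : r = 1 := by
          have d1 : orderOf r ∣ 3 := orderOf_dvd_of_pow_eq_one hr3
          have d2 : orderOf r ∣ q - 1 := orderOf_dvd_of_pow_eq_one hrq1
          have : orderOf r ∣ 1 := hgcd ▸ Nat.dvd_gcd d1 d2
          exact orderOf_eq_one_iff.mp (Nat.dvd_one.mp this)
        have hab' : a = b := by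
          rw [hr] at hr1
          exact (mul_inv_eq_one₀ hbz).mp hr1
        rw [ha, hb] at hab'
        have h0 : (2 * ζ - 1) * (u - v) = 0 := by linear_combination hab'
        rcases mul_eq_zero.mp h0 with h | h
        · exact absurd h h2ζ
        · exact sub_eq_zero.mp h
    -- finish
    rw [← huv] at h1
    have hx3 : x ^ 3 = y ^ 3 := mul_right_cancel₀ hBu h1
    have hxyq : x ^ (q - 1) = y ^ (q - 1) := by rw [← hu, ← hv]; exact huv
    have ht3 : (x * y⁻¹) ^ 3 = 1 := by
      rw [mul_pow, inv_pow, hx3, mul_inv_cancel₀ (pow_ne_zero _ hy0)]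
    have htq : (x * y⁻¹) ^ (q - 1) = 1 := by
      rw [mul_pow, inv_pow, hxyq, mul_inv_cancel₀ (pow_ne_zero _ hy0)]
    have ht1 : x * y⁻¹ = 1 := by
      have d1 := orderOf_dvd_of_pow_eq_one ht3
      have d2 := orderOf_dvd_of_pow_eq_one htq
      have : orderOf (x * y⁻¹) ∣ 1 := hgcd ▸ Nat.dvd_gcd d1 d2
      exact orderOf_eq_one_iff.mp (Nat.dvd_one.mp this)
    exact (mul_inv_eq_one₀ hy0).mp ht1
end

section
/- Let p be a prime with p ≠ 3, q = p^k, and ω ∈ F_{q^2} of order 3. For p-powers Q, R, S, the polynomials N(X) = (X+ω)^{Q+S}(ωX+1)^R and D(X) = (ωX+1)^{Q+S}(X+ω)^R satisfy gcd(N, D) = (X^2 - X + 1)^{min(Q+S, R)} in F_{q^2}[X]. Consequently, setting U(X) = N(X) - ωD(X) and V(X) = -ωN(X) + D(X), we have gcd(U, V) = (X^2 - X + 1)^{min(Q+S, R)}. -/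
open Polynomial

private lemma aux15 {F : Type*} [Field F] [DecidableEq F] (a b w : F[X])
    (hcop : IsCoprime a b) (hwmon : w.Monic) (c : F) (hc : c ≠ 0)
    (hab : a * b = C c * w) (m r : ℕ) (hmr : m ≤ r) :
    gcd (a ^ m * b ^ r) (b ^ m * a ^ r) = w ^ m := by
  obtain ⟨t, rfl⟩ : ∃ t, r = m + t := ⟨r - m, (Nat.add_sub_cancel' hmr).symm⟩
  have e1 : a ^ m * b ^ (m + t) = (a * b) ^ m * b ^ t := by rw [pow_add, mul_pow]; ring
  have e2 : b ^ m * a ^ (m + t) = (a * b) ^ m * a ^ t := by rw [pow_add, mul_pow]; ring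
  rw [e1, e2, gcd_mul_left]
  have hg1 : gcd (b ^ t) (a ^ t) = 1 := by
    rw [← normalize_gcd, normalize_eq_one]
    exact (hcop.symm.pow).isUnit_of_dvd' (gcd_dvd_left _ _) (gcd_dvd_right _ _)
  rw [hg1, mul_one]
  have h2 : (a * b) ^ m = C (c ^ m) * w ^ m := by rw [hab, mul_pow, ← C_pow]
  rw [h2]
  have hu : IsUnit (C (c ^ m) : F[X]) := isUnit_C.mpr (isUnit_iff_ne_zero.mpr (pow_ne_zero m hc))
  have hd1 : C (c ^ m) * w ^ m ∣ w ^ m := hu.dvd_mul_left.mp dvd_rfl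
  have hd2 : w ^ m ∣ C (c ^ m) * w ^ m := dvd_mul_left _ _
  rw [normalize_eq_normalize hd1 hd2, (hwmon.pow _).normalize_eq_self]

/-- Statement 15: with `N = (X+ω)^{Q+S}(ωX+1)^R` and
`D = (ωX+1)^{Q+S}(X+ω)^R`, the monic gcd of `N` and `D` is
`(X^2-X+1)^{min(Q+S,R)}`, and the same holds for
`U = N - ωD` and `V = -ωN + D`. -/
theorem stmt15 (p k q : ℕ) (hp : p.Prime) (hp3 : p ≠ 3) (hk : 0 < k)
    (hq : q = p ^ k)
    (F : Type*) [Field F] [Fintype F] [DecidableEq F] (hF : Fintype.card F = q ^ 2)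
    (ω : F) (hω : orderOf ω = 3)
    (Q R S : ℕ) (hQ : ∃ i : ℕ, Q = p ^ i) (hR : ∃ i : ℕ, R = p ^ i)
    (hS : ∃ i : ℕ, S = p ^ i)
    (N D U V : Polynomial F)
    (hN : N = (X + C ω) ^ (Q + S) * (C ω * X + 1) ^ R)
    (hD : D = (C ω * X + 1) ^ (Q + S) * (X + C ω) ^ R)
    (hU : U = N - C ω * D) (hV : V = -(C ω) * N + D) :
    gcd N D = (X ^ 2 - X + 1 : Polynomial F) ^ min (Q + S) R ∧
      gcd U V = (X ^ 2 - X + 1 : Polynomial F) ^ min (Q + S) R := by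
  -- basic facts about ω
  have hω3 : ω ^ 3 = 1 := by rw [← hω]; exact pow_orderOf_eq_one ω
  have hω1 : ω ≠ 1 := by
    intro h; rw [h, orderOf_one] at hω; omega
  have hsum : ω ^ 2 + ω + 1 = 0 := by
    have h : (ω - 1) * (ω ^ 2 + ω + 1) = 0 := by ring_nf; linear_combination hω3
    rcases mul_eq_zero.mp h with h' | h'
    · exact absurd (sub_eq_zero.mp h') hω1
    · exact h'
  have hω0 : ω ≠ 0 := by
    intro h; rw [h] at hω3; simp at hω3
  have hω2 : ω ^ 2 ≠ 1 := by
    intro h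
    have : orderOf ω ∣ 2 := orderOf_dvd_of_pow_eq_one h
    rw [hω] at this; omega
  have he0 : (1 : F) - ω ^ 2 ≠ 0 := fun h => hω2 (sub_eq_zero.mp h).symm
  set e : F := (1 - ω ^ 2)⁻¹ with he
  have hee : e * (1 - ω ^ 2) = 1 := inv_mul_cancel₀ he0
  -- coprimality of X + ω and ωX + 1
  have hCee : (C e : F[X]) * (1 - C ω ^ 2) = 1 := by
    have := congrArg (C : F → F[X]) hee
    simpa [C_mul, C_sub, C_pow] using this
  have hcop : IsCoprime (X + C ω : F[X]) (C ω * X + 1) := by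
    refine ⟨-(C ω) * C e, C e, ?_⟩
    linear_combination hCee
  -- product identity
  have hCsum : (C ω : F[X]) ^ 2 + C ω + 1 = 0 := by
    have := congrArg (C : F → F[X]) hsum
    simpa [C_add, C_pow] using this
  have hab : (X + C ω : F[X]) * (C ω * X + 1) = C ω * (X ^ 2 - X + 1) := by
    linear_combination X * hCsum
  have hwmon : (X ^ 2 - X + 1 : F[X]).Monic := by monicity!
  -- first part
  have hgcdND : gcd N D = (X ^ 2 - X + 1 : F[X]) ^ min (Q + S) R := by
    rcases le_total (Q + S) R with h | h
    · rw [min_eq_left h, hN, hD]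
      exact aux15 _ _ _ hcop hwmon ω hω0 hab _ _ h
    · rw [min_eq_right h, hN, hD, mul_comm ((X + C ω) ^ (Q + S)), mul_comm ((C ω * X + 1) ^ (Q + S))]
      have hab' : (C ω * X + 1 : F[X]) * (X + C ω) = C ω * (X ^ 2 - X + 1) := by
        rw [mul_comm]; exact hab
      exact aux15 _ _ _ hcop.symm hwmon ω hω0 hab' _ _ h
  refine ⟨hgcdND, ?_⟩
  -- second part : gcd U V = gcd N D
  have hu : IsUnit ((1 : F[X]) - C ω ^ 2) := by
    rw [show ((1 : F[X]) - C ω ^ 2) = C (1 - ω ^ 2) by simp [C_sub, C_pow]]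
    exact isUnit_C.mpr (isUnit_iff_ne_zero.mpr he0)
  have h1 : U + C ω * V = (1 - C ω ^ 2) * N := by rw [hU, hV]; ring
  have h2 : C ω * U + V = (1 - C ω ^ 2) * D := by rw [hU, hV]; ring
  have hdN : gcd U V ∣ N := by
    have : gcd U V ∣ (1 - C ω ^ 2) * N := by
      rw [← h1]; exact dvd_add (gcd_dvd_left _ _) (Dvd.dvd.mul_left (gcd_dvd_right _ _) _)
    exact hu.dvd_mul_left.mp this
  have hdD : gcd U V ∣ D := by
    have : gcd U V ∣ (1 - C ω ^ 2) * D := by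
      rw [← h2]; exact dvd_add (Dvd.dvd.mul_left (gcd_dvd_left _ _) _) (gcd_dvd_right _ _)
    exact hu.dvd_mul_left.mp this
  have hdU : gcd N D ∣ U := by
    rw [hU]; exact dvd_sub (gcd_dvd_left _ _) (Dvd.dvd.mul_left (gcd_dvd_right _ _) _)
  have hdV : gcd N D ∣ V := by
    rw [hV]
    exact dvd_add ((Dvd.dvd.mul_left (gcd_dvd_left _ _) _)) (gcd_dvd_right _ _)
  have := normalize_eq_normalize (dvd_gcd hdN hdD) (dvd_gcd hdU hdV)
  rw [normalize_gcd, normalize_gcd] at this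
  rw [this, hgcdND]
end

section
/- Let q be a prime power with q ≡ 1 (mod 3), let ω ∈ F_q have multiplicative order 3, and let Q, R, S be powers of the characteristic p of F_q (p ≠ 3). Let f(X) = X^{Q+R+S} B_1(X^{q-1}) be the polynomial of Theorem 1 with r = Q+R+S and z = 1, and let β = ω^{Q+R} - ω^{S+1} if Q+R+S ≡ 1 (mod 3), else β = ω^{Q+R+S} - ω. Then the map induced by f on F_{q^2} equals ρ ∘ g ∘ η, where η(x) = ω x^q + x, g(x) = x^{Q+R+S}, and ρ(x) = β^{-1}(-ω x^q + x); moreover η and ρ are F_q-vector space automorphisms of F_{q^2}. In particular f is F_q-linearly equivalent to X^{Q+R+S} on F_{q^2}. -/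
open Polynomial

/-- Statement 16: for `q ≡ 1 (mod 3)`, the polynomial
`f(X) = X^{Q+R+S} B₁(X^{q-1})` of Theorem 1 (with `r = Q+R+S`, `z = 1`,
`B₁ = C₁/β`) satisfies `f = ρ ∘ g ∘ η` on `F_{q^2}`, where
`η(x) = ω x^q + x`, `g(x) = x^{Q+R+S}`, `ρ(x) = β⁻¹(-ω x^q + x)`, and `η`, `ρ`
are `F_q`-vector space automorphisms of `F_{q^2}` (bijective, additive, and
`F_q`-homogeneous). In particular `f` is `F_q`-linearly equivalent to
`X^{Q+R+S}`. -/
theorem stmt16 (p k q : ℕ) (hp : p.Prime) (hp3 : p ≠ 3) (hk : 0 < k)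
    (hq : q = p ^ k) (hq3 : q % 3 = 1)
    (F : Type*) [Field F] [Fintype F] (hF : Fintype.card F = q ^ 2)
    (ω : F) (hω : orderOf ω = 3)
    (Q R S : ℕ) (hQ : ∃ i : ℕ, Q = p ^ i) (hR : ∃ i : ℕ, R = p ^ i)
    (hS : ∃ i : ℕ, S = p ^ i)
    (C₁ : Polynomial F)
    (hC₁ : C₁ =
      -(C ω) * ((X ^ Q + C (ω ^ Q)) * (X ^ R + C (ω ^ R)) * (X ^ S + C (ω ^ S)))
        + (C (ω ^ Q) * X ^ Q + 1) * (C (ω ^ R) * X ^ R + 1) *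
          (C (ω ^ S) * X ^ S + 1))
    (β : F)
    (hβ : β = if (Q + R + S) % 3 = 1 then ω ^ (Q + R) - ω ^ (S + 1)
      else ω ^ (Q + R + S) - ω) :
    (∀ x : F,
        x ^ (Q + R + S) * (β⁻¹ * C₁.eval (x ^ (q - 1))) =
          β⁻¹ * (-(ω * ((ω * x ^ q + x) ^ (Q + R + S)) ^ q) +
            (ω * x ^ q + x) ^ (Q + R + S))) ∧
      Function.Bijective (fun x : F => ω * x ^ q + x) ∧
      (∀ x y : F, ω * (x + y) ^ q + (x + y) =
        (ω * x ^ q + x) + (ω * y ^ q + y)) ∧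
      (∀ c x : F, c ^ q = c → ω * (c * x) ^ q + c * x = c * (ω * x ^ q + x)) ∧
      Function.Bijective (fun x : F => β⁻¹ * (-(ω * x ^ q) + x)) ∧
      (∀ x y : F, β⁻¹ * (-(ω * (x + y) ^ q) + (x + y)) =
        β⁻¹ * (-(ω * x ^ q) + x) + β⁻¹ * (-(ω * y ^ q) + y)) ∧
      (∀ c x : F, c ^ q = c →
        β⁻¹ * (-(ω * (c * x) ^ q) + c * x) =
          c * (β⁻¹ * (-(ω * x ^ q) + x))) := by
  obtain ⟨iQ, hiQ⟩ := hQ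
  obtain ⟨iR, hiR⟩ := hR
  obtain ⟨iS, hiS⟩ := hS
  haveI : Fact p.Prime := ⟨hp⟩
  have hq1 : 1 ≤ q := by rw [hq]; exact Nat.one_le_pow _ _ hp.pos
  -- characteristic of F is p
  have hcharp : CharP F p := by
    have hcast : ((q ^ 2 : ℕ) : F) = 0 := by
      rw [← hF]; exact FiniteField.cast_card_eq_zero F
    have hcast2 : ((p : F)) ^ (k * 2) = 0 := by
      push_cast at hcast
      rw [hq] at hcast
      push_cast at hcast
      rw [← pow_mul] at hcast
      exact hcast
    have hp0 : (p : F) = 0 := by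
      have := pow_eq_zero_iff (n := k * 2) (by positivity) |>.mp hcast2
      exact this
    have hdvd : ringChar F ∣ p := ringChar.dvd hp0
    rcases (Nat.Prime.eq_one_or_self_of_dvd hp _ hdvd) with h1 | h1
    · exact absurd h1 (CharP.ringChar_ne_one)
    · exact ringChar.of_eq h1
  haveI := hcharp
  -- Frobenius facts
  have frobP : ∀ (T i : ℕ), T = p ^ i → ∀ a b : F, (a + b) ^ T = a ^ T + b ^ T := by
    intro T i hT a b; subst hT; rw [add_pow_char_pow]
  have frobq : ∀ a b : F, (a + b) ^ q = a ^ q + b ^ q := frobP q k hq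
  have hqne : q ≠ 0 := by omega
  have hneg : ∀ a : F, (-a) ^ q = -(a ^ q) := by
    intro a
    have h := frobq a (-a)
    rw [add_neg_cancel, zero_pow hqne] at h
    linear_combination -h
  have hsub : ∀ a b : F, (a - b) ^ q = a ^ q - b ^ q := by
    intro a b
    rw [sub_eq_add_neg, frobq, hneg, sub_eq_add_neg]
  -- power facts for ω
  have hω3 : ω ^ 3 = 1 := by rw [← hω]; exact pow_orderOf_eq_one ω
  have hω0 : ω ≠ 0 := by
    intro h; rw [h] at hω3; simp at hω3
  have hmod : ∀ t : ℕ, ω ^ t = ω ^ (t % 3) := by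
    intro t
    conv_lhs => rw [← Nat.div_add_mod t 3]
    rw [pow_add, pow_mul, hω3, one_pow, one_mul]
  have hωq : ω ^ q = ω := by rw [hmod q, hq3, pow_one]
  have hxq2 : ∀ y : F, (y ^ q) ^ q = y := by
    intro y
    rw [← pow_mul, ← sq, ← hF, FiniteField.pow_card]
  -- order-3 injectivity facts
  have hωne1 : ω ≠ 1 := by
    intro h
    rw [h] at hω; simp at hω
  have hω2ne1 : ω ^ 2 ≠ 1 := by
    intro h
    have := orderOf_dvd_of_pow_eq_one h
    rw [hω] at this
    omega
  have key2 : ∀ m n : ℕ, m < n → n < 3 → ω ^ m ≠ ω ^ n := by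
    intro m n hmn hn3 h
    have h1 : ω ^ m * ω ^ (n - m) = ω ^ m * 1 := by
      rw [mul_one, ← pow_add, show m + (n - m) = n by omega, h]
    have h2 : ω ^ (n - m) = 1 := mul_left_cancel₀ (pow_ne_zero _ hω0) h1
    have h3 := orderOf_dvd_of_pow_eq_one h2
    rw [hω] at h3
    have := Nat.le_of_dvd (by omega) h3
    omega
  have key : ∀ m n : ℕ, m < 3 → n < 3 → ω ^ m = ω ^ n → m = n := by
    intro m n hm hn h
    by_contra hne
    rcases Nat.lt_or_ge m n with hlt | hge
    · exact key2 m n hlt hn h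
    · exact key2 n m (by omega) hm h.symm
  have hpow_ne : ∀ m n : ℕ, m % 3 ≠ n % 3 → ω ^ m ≠ ω ^ n := by
    intro m n hne h
    apply hne
    apply key _ _ (Nat.mod_lt _ (by norm_num)) (Nat.mod_lt _ (by norm_num))
    rw [← hmod, ← hmod]
    exact h
  -- residues of Q, R, S mod 3 are nonzero
  have hndvd : ∀ (T i : ℕ), T = p ^ i → T % 3 ≠ 0 := by
    intro T i hT h
    have h3 : (3 : ℕ) ∣ T := Nat.dvd_of_mod_eq_zero h
    rw [hT] at h3
    have h4 : (3 : ℕ) ∣ p := Nat.Prime.dvd_of_dvd_pow (by norm_num) h3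
    have h5 : 3 = p := ((Nat.prime_dvd_prime_iff_eq (by norm_num) hp).mp h4)
    exact hp3 h5.symm
  have hQ3 := hndvd Q iQ hiQ
  have hR3 := hndvd R iR hiR
  have hS3 := hndvd S iS hiS
  -- β ≠ 0
  have hβne : β ≠ 0 := by
    rw [hβ]
    split_ifs with hr
    · apply sub_ne_zero_of_ne
      apply hpow_ne
      omega
    · apply sub_ne_zero_of_ne
      simpa using hpow_ne (Q + R + S) 1 (by omega)
  -- kernel lemmas
  have ker_η : ∀ x : F, ω * x ^ q + x = 0 → x = 0 := by
    intro x h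
    by_contra hx
    have h1 : ω * x ^ q = -x := by linear_combination h
    have h2 : (ω * x ^ q) ^ q = (-x) ^ q := by rw [h1]
    rw [mul_pow, hωq, hxq2 x, hneg] at h2
    -- h2 : ω * x = -(x^q), so x^q = -(ω*x)
    have h3 : x ^ q = -(ω * x) := by linear_combination h2
    rw [h3] at h1
    -- ω * -(ω*x) = -x ⇒ ω^2 * x = x
    have h4 : ω ^ 2 * x = x := by linear_combination -h1
    have h5 : ω ^ 2 = 1 := by
      have := mul_right_cancel₀ hx (h4.trans (one_mul x).symm)
      exact this
    exact hω2ne1 h5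
  have ker_ρ : ∀ x : F, -(ω * x ^ q) + x = 0 → x = 0 := by
    intro x h
    by_contra hx
    have h1 : x = ω * x ^ q := by linear_combination h
    have h2 : x ^ q = (ω * x ^ q) ^ q := by rw [← h1]
    rw [mul_pow, hωq, hxq2 x] at h2
    -- h2 : x^q = ω * x
    rw [h2] at h1
    have h4 : ω ^ 2 * x = x := by linear_combination -h1
    have h5 : ω ^ 2 = 1 := mul_right_cancel₀ hx (h4.trans (one_mul x).symm)
    exact hω2ne1 h5
  refine ⟨?_, ?_, ?_, ?_, ?_, ?_, ?_⟩
  · -- main identity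
    intro x
    subst hC₁
    simp only [eval_add, eval_mul, eval_neg, eval_pow, eval_C, eval_X, eval_one]
    have hxx : x * x ^ (q - 1) = x ^ q := by
      rw [← pow_succ']
      congr 1
      omega
    have h1 : ∀ (T i : ℕ), T = p ^ i → (x ^ q) ^ T = x ^ T * (x ^ (q - 1)) ^ T := by
      intro T i hT
      rw [← hxx, mul_pow]
    have hA : ∀ (T i : ℕ), T = p ^ i →
        (ω * x ^ q + x) ^ T = ω ^ T * (x ^ q) ^ T + x ^ T := by
      intro T i hT
      rw [frobP T i hT, mul_pow]
    have hB : ∀ (T i : ℕ), T = p ^ i →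
        (ω * x + x ^ q) ^ T = ω ^ T * x ^ T + (x ^ q) ^ T := by
      intro T i hT
      rw [frobP T i hT, mul_pow]
    have huq : (ω * x ^ q + x) ^ q = ω * x + x ^ q := by
      rw [frobq, mul_pow, hωq, hxq2 x]
    have hq_pow : ((ω * x ^ q + x) ^ (Q + R + S)) ^ q
        = ((ω * x ^ q + x) ^ q) ^ (Q + R + S) := by
      rw [← pow_mul, ← pow_mul, Nat.mul_comm]
    rw [hq_pow, huq]
    simp only [pow_add]
    rw [hA Q iQ hiQ, hA R iR hiR, hA S iS hiS,
        hB Q iQ hiQ, hB R iR hiR, hB S iS hiS,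
        h1 Q iQ hiQ, h1 R iR hiR, h1 S iS hiS]
    ring
  · -- η bijective
    rw [← Finite.injective_iff_bijective]
    intro x y h
    simp only at h
    have h0 : ω * (x - y) ^ q + (x - y) = 0 := by
      rw [hsub]
      linear_combination h
    exact sub_eq_zero.mp (ker_η _ h0)
  · intro x y
    rw [frobq]
    ring
  · intro c x hc
    rw [mul_pow, hc]
    ring
  · -- ρ bijective
    rw [← Finite.injective_iff_bijective]
    intro x y h
    simp only at h
    have hβinv : β⁻¹ ≠ 0 := inv_ne_zero hβne
    have h' : -(ω * x ^ q) + x = -(ω * y ^ q) + y := mul_left_cancel₀ hβinv h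
    have h0 : -(ω * (x - y) ^ q) + (x - y) = 0 := by
      rw [hsub]
      linear_combination h'
    exact sub_eq_zero.mp (ker_ρ _ h0)
  · intro x y
    rw [frobq]
    ring
  · intro c x hc
    rw [mul_pow, hc]
    ring
end

section
/- Let q be a prime power with q ≡ 2 (mod 3) and let ω ∈ F_{q^2} have multiplicative order 3. Then the map η : F_{q^2} → F_q × F_q defined by η(x) = (ω^q x + (ω^q x)^q, ω x + (ω x)^q) is an F_q-vector space isomorphism. -/
/-!
Write `σ x = x ^ q`; on a field with `q ^ 2` elements this is an involutive ring automorphism,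
and `σ ω = ω ^ 2` because `q ≡ 2 (mod 3)`. With `v = σ x`, the two coordinates of `η x` are
`ω² x + ω v` and `ω x + ω² v`; multiplying the first by `ω` and subtracting the second leaves
`(1 - ω) x`, so `η` is injective and `x = (ω a - b) / (1 - ω)` is a preimage of any `σ`-fixed
pair `(a, b)`. Both coordinates are traces `y + σ y`, hence `σ`-fixed.
-/

/-- The paper's `η`, with the Frobenius `x ↦ x ^ q` abstracted to a ring endomorphism `σ`. -/
def tracePair {K : Type*} [Field K] (σ : K →+* K) (ω x : K) : K × K :=
  (σ ω * x + σ (σ ω * x), ω * x + σ (ω * x))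

theorem FiniteField.exists_ringHom_eq_pow_of_dvd_card {F : Type*} [Field F] [Fintype F] {q : ℕ}
    (hq : q ∣ Fintype.card F) : ∃ σ : F →+* F, ∀ x, σ x = x ^ q := by
  obtain ⟨p, _⟩ := CharP.exists F
  obtain ⟨n, hp, hcard⟩ := FiniteField.card F p
  obtain ⟨i, -, rfl⟩ := (Nat.dvd_prime_pow hp).1 (hcard ▸ hq)
  have := Fact.mk hp
  exact ⟨iterateFrobenius F p i, iterateFrobenius_def p i⟩

section tracePair

variable {K : Type*} [Field K] (σ : K →+* K)

theorem tracePair_add (ω x y : K) :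
    tracePair σ ω (x + y) = tracePair σ ω x + tracePair σ ω y := by
  simp only [tracePair, mul_add, map_add, Prod.mk_add_mk, Prod.mk.injEq]
  constructor <;> ring

theorem tracePair_mul_of_fixed (ω : K) {c : K} (hc : σ c = c) (x : K) :
    tracePair σ ω (c * x) = c • tracePair σ ω x := by
  simp only [tracePair, map_mul, hc, Prod.smul_mk, smul_eq_mul, Prod.mk.injEq]
  constructor <;> ring

variable {ω : K} (hω : IsPrimitiveRoot ω 3) (hσω : σ ω = ω ^ 2)
include hω hσω

theorem tracePair_injective : Function.Injective (tracePair σ ω) := by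
  intro x y h
  simp only [tracePair, map_mul, map_pow, hσω, Prod.mk.injEq] at h
  obtain ⟨h₁, h₂⟩ := h
  have hω₃ : ω ^ 3 = 1 := hω.pow_eq_one
  have : (1 - ω) * (x - y) = 0 := by
    linear_combination ω * h₁ - h₂ - ((x - y) + ω ^ 2 * (σ x - σ y)) * hω₃
  exact sub_eq_zero.1 <| (mul_eq_zero.1 this).resolve_left <|
    sub_ne_zero.2 (hω.ne_one (by norm_num)).symm

theorem range_tracePair (hσ : Function.Involutive σ) :
    Set.range (tracePair σ ω) = {a | σ a.1 = a.1 ∧ σ a.2 = a.2} := by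
  ext ⟨a, b⟩
  constructor
  · rintro ⟨x, hx⟩
    simp only [tracePair, Prod.mk.injEq] at hx
    simp only [← hx.1, ← hx.2, Set.mem_ofPred_eq, map_add, hσ _]
    constructor <;> ring
  · rintro ⟨ha, hb⟩
    dsimp only at ha hb
    have hω₃ : ω ^ 3 = 1 := hω.pow_eq_one
    have h₁ : 1 - ω ≠ 0 := sub_ne_zero.2 (hω.ne_one (by norm_num)).symm
    have h₂ : 1 - ω ^ 2 ≠ 0 :=
      sub_ne_zero.2 (hω.pow_ne_one_of_pos_of_lt (by norm_num) (by norm_num)).symm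
    refine ⟨(ω * a - b) / (1 - ω), ?_⟩
    simp only [tracePair, map_mul, map_div₀, map_sub, map_one, map_pow, hσω, ha, hb,
      Prod.mk.injEq]
    constructor
    · field_simp
      linear_combination (a * ((ω ^ 3 + 1) * (1 - ω) - ω ^ 2) + ω ^ 2 * b) * hω₃
    · field_simp
      linear_combination (b - ω ^ 2 * a) * hω₃

end tracePair

theorem stmt18_general (q : ℕ)
    (hq3 : q % 3 = 2)
    (F : Type*) [Field F] [Fintype F] (hF : Fintype.card F = q ^ 2)
    (ω : F) (hω : orderOf ω = 3) :
    Function.Injective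
        (fun x : F => (ω ^ q * x + (ω ^ q * x) ^ q, ω * x + (ω * x) ^ q)) ∧
      Set.range (fun x : F =>
          (ω ^ q * x + (ω ^ q * x) ^ q, ω * x + (ω * x) ^ q)) =
        {a : F × F | a.1 ^ q = a.1 ∧ a.2 ^ q = a.2} ∧
      (∀ x y : F,
        (ω ^ q * (x + y) + (ω ^ q * (x + y)) ^ q,
            ω * (x + y) + (ω * (x + y)) ^ q) =
          (ω ^ q * x + (ω ^ q * x) ^ q, ω * x + (ω * x) ^ q) +
            (ω ^ q * y + (ω ^ q * y) ^ q, ω * y + (ω * y) ^ q)) ∧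
      (∀ c x : F, c ^ q = c →
        (ω ^ q * (c * x) + (ω ^ q * (c * x)) ^ q,
            ω * (c * x) + (ω * (c * x)) ^ q) =
          (c * (ω ^ q * x + (ω ^ q * x) ^ q),
            c * (ω * x + (ω * x) ^ q))) := by
  obtain ⟨σ, hσ⟩ :=
    FiniteField.exists_ringHom_eq_pow_of_dvd_card (hF ▸ dvd_pow_self q two_ne_zero)
  have hσσ : Function.Involutive σ := fun x => by
    rw [hσ, hσ, ← pow_mul, ← sq, ← hF, FiniteField.pow_card]
  have hσω : σ ω = ω ^ 2 := by rw [hσ, ← pow_mod_orderOf, hω, hq3]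
  have hω' : IsPrimitiveRoot ω 3 := hω ▸ IsPrimitiveRoot.orderOf ω
  simp only [← hσ]
  exact ⟨tracePair_injective σ hω' hσω, range_tracePair σ hω' hσω hσσ,
    tracePair_add σ ω, fun c x hc => tracePair_mul_of_fixed σ ω hc x⟩

/-- Statement 18: for `q ≡ 2 (mod 3)` and `ω` of order `3`, the map
`η(x) = (ω^q x + (ω^q x)^q, ω x + (ω x)^q)` is an `F_q`-vector space
isomorphism from `F_{q^2}` onto `F_q × F_q`: it is injective, its range is
exactly `F_q × F_q`, and it is additive and `F_q`-homogeneous. -/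
theorem stmt18 (q : ℕ) (hq : ∃ p k : ℕ, p.Prime ∧ 0 < k ∧ q = p ^ k)
    (hq3 : q % 3 = 2)
    (F : Type*) [Field F] [Fintype F] (hF : Fintype.card F = q ^ 2)
    (ω : F) (hω : orderOf ω = 3) :
    Function.Injective
        (fun x : F => (ω ^ q * x + (ω ^ q * x) ^ q, ω * x + (ω * x) ^ q)) ∧
      Set.range (fun x : F =>
          (ω ^ q * x + (ω ^ q * x) ^ q, ω * x + (ω * x) ^ q)) =
        {a : F × F | a.1 ^ q = a.1 ∧ a.2 ^ q = a.2} ∧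
      (∀ x y : F,
        (ω ^ q * (x + y) + (ω ^ q * (x + y)) ^ q,
            ω * (x + y) + (ω * (x + y)) ^ q) =
          (ω ^ q * x + (ω ^ q * x) ^ q, ω * x + (ω * x) ^ q) +
            (ω ^ q * y + (ω ^ q * y) ^ q, ω * y + (ω * y) ^ q)) ∧
      (∀ c x : F, c ^ q = c →
        (ω ^ q * (c * x) + (ω ^ q * (c * x)) ^ q,
            ω * (c * x) + (ω * (c * x)) ^ q) =
          (c * (ω ^ q * x + (ω ^ q * x) ^ q),
            c * (ω * x + (ω * x) ^ q))) :=
  stmt18_general q hq3 F hF ω hω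
end

section
/- Let p be a prime with p ≠ 3, q = p^k with q ≡ 2 (mod 3), ω ∈ F_{q^2} of order 3, and Q, R, S powers of p. Let f(X) = X^{Q+R+S} B_1(X^{q-1}) with B_1 as in Theorem 1 (B_1 = C_1/β where C_1(X) = -ω(X^Q+ω^Q)(X^R+ω^R)(X^S+ω^S) + (ω^Q X^Q+1)(ω^R X^R+1)(ω^S X^S+1)). Then f is F_q-linearly equivalent to the map (x,y) ↦ (x^{Q+R+S}, y^{Q+R+S}) on F_q × F_q; consequently f permutes F_{q^2} if and only if gcd(Q+R+S, q-1) = 1. -/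
open Polynomial

/-!
Let `σ x = x ^ q`, the involution of `F = 𝔽_{q²}` fixing `𝔽_q`. As `q ≡ 2 (mod 3)`,
`σ ω = ω² ≠ ω`, so `(a, b) ↦ b - ω a` is an `𝔽_q`-isomorphism `𝔽_q × 𝔽_q → F`. Because `Q`, `R`,
`S` are powers of the characteristic, each factor of `X ^ N C₁(X ^ (q - 1))` (`N = Q + R + S`)
becomes a `Q`-th, `R`-th or `S`-th power of a linear form in `x` and `σ x`, whence
`x ^ N C₁(x ^ (q - 1)) = -ω (σ x + ω x) ^ N + (ω σ x + x) ^ N`. Scaled by `ω`, these two forms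
are `σ`-invariant and serve as `𝔽_q`-coordinates of `x`, turning `f` into
`(a, b) ↦ (a ^ N, b ^ N)`. This permutes `𝔽_q × 𝔽_q` iff `x ↦ x ^ N` is injective on `𝔽_q`; if a
prime `ℓ` divides `gcd(N, q - 1)`, an element of order `ℓ` of `𝔽_{q²}ˣ` (Cauchy) lies in `𝔽_q`
and has the same `N`-th power as `1`.
-/

open Set Function

namespace PermutationPolynomial

noncomputable def numeratorC₁ {A : Type*} [CommRing A] (ω : A) (Q R S : ℕ) : A[X] :=
  -(C ω) * ((X ^ Q + C (ω ^ Q)) * (X ^ R + C (ω ^ R)) * (X ^ S + C (ω ^ S)))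
    + (C (ω ^ Q) * X ^ Q + 1) * (C (ω ^ R) * X ^ R + 1) * (C (ω ^ S) * X ^ S + 1)

theorem pow_mul_eval_numeratorC₁ {A : Type*} [CommRing A] {p : ℕ} [ExpChar A p] {Q R S : ℕ}
    (hQ : ∃ i, Q = p ^ i) (hR : ∃ i, R = p ^ i) (hS : ∃ i, S = p ^ i) (ω x y : A) :
    x ^ (Q + R + S) * (numeratorC₁ ω Q R S).eval y =
      -ω * (x * y + ω * x) ^ (Q + R + S) + (ω * (x * y) + x) ^ (Q + R + S) := by
  obtain ⟨i, rfl⟩ := hQ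
  obtain ⟨j, rfl⟩ := hR
  obtain ⟨l, rfl⟩ := hS
  simp only [numeratorC₁, eval_add, eval_mul, eval_neg, eval_C, eval_pow, eval_X, eval_one,
    pow_add, add_pow_expChar_pow, mul_pow]
  ring

section OrderThree

variable {M : Type*} [Monoid M] {ω : M}

theorem pow_eq_sq_of_orderOf_eq_three (hω : orderOf ω = 3) {q : ℕ} (hq : q % 3 = 2) :
    ω ^ q = ω ^ 2 := by
  rw [← pow_mod_orderOf, hω, hq]

theorem sq_ne_self_of_orderOf_eq_three (hω : orderOf ω = 3) : ω ^ 2 ≠ ω := fun h => by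
  have := (orderOf_pos_iff.1 (by omega)).pow_inj_mod.1 (h.trans (pow_one ω).symm)
  rw [hω] at this
  omega

end OrderThree

theorem three_not_dvd_pow {p : ℕ} (hp : p.Prime) (hp3 : p ≠ 3) (i : ℕ) : ¬ 3 ∣ p ^ i :=
  (Nat.Prime.coprime_iff_not_dvd Nat.prime_three).1
    (((Nat.coprime_primes Nat.prime_three hp).2 hp3.symm).pow_right i)

theorem ite_pow_sub_pow_ne_zero {F : Type*} [Field F] {ω : F} (hω : orderOf ω = 3)
    {Q R S : ℕ} (hS : ¬ 3 ∣ S) :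
    (if (Q + R + S) % 3 = 1 then ω ^ (Q + R) - ω ^ (S + 1) else ω ^ (Q + R + S) - ω) ≠ 0 := by
  have hω' : IsOfFinOrder ω := orderOf_pos_iff.1 (by omega)
  split_ifs with h
  · rw [sub_ne_zero, Ne, hω'.pow_inj_mod, hω]
    omega
  · rw [sub_ne_zero]
    nth_rw 2 [← pow_one ω]
    rw [Ne, hω'.pow_inj_mod, hω]
    omega

section Involution

variable {F : Type*} [Field F] (σ : F →+* F)

theorem bijOn_mul_sub_mul (hσ : ∀ x, σ (σ x) = x) {θ : F} (hθ : σ θ ≠ θ) {γ : F} (hγ : γ ≠ 0) :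
    BijOn (fun a : F × F => γ * (a.2 - θ * a.1)) ({c | σ c = c} ×ˢ {c | σ c = c}) univ := by
  refine (bijOn_univ.2 (mulLeft_bijective₀ γ hγ)).comp ⟨mapsTo_univ _ _, ?_, fun x _ => ?_⟩
  · rintro ⟨a, b⟩ ⟨ha : σ a = a, hb : σ b = b⟩ ⟨a', b'⟩ ⟨ha' : σ a' = a', hb' : σ b' = b'⟩
      (h : b - θ * a = b' - θ * a')
    have hσh := congrArg σ h
    simp only [map_sub, map_mul, ha, hb, ha', hb'] at hσh
    obtain rfl : a = a' := by
      have : (σ θ - θ) * (a - a') = 0 := by linear_combination h - hσh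
      exact sub_eq_zero.1 ((mul_eq_zero.1 this).resolve_left (sub_ne_zero.2 hθ))
    rw [sub_left_inj.1 h]
  -- Applying `σ` to `x = b - θ a` gives `σ x = b - σ θ a`, which determines `a` and then `b`.
  · set a := (x - σ x) / (σ θ - θ) with ha
    have hxa : x - σ x = (σ θ - θ) * a := by rw [ha, mul_div_cancel₀ _ (sub_ne_zero.2 hθ)]
    have hσa : σ a = a := by
      rw [ha, map_div₀, map_sub, map_sub, hσ, hσ, ← neg_div_neg_eq, neg_sub, neg_sub]
    refine ⟨(a, x + θ * a), ⟨hσa, ?_⟩, by simp⟩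
    change σ (x + θ * a) = x + θ * a
    rw [map_add, map_mul, hσa]
    linear_combination -hxa

/-- `σ x + ω x` and `ω σ x + x` are `ω²`-eigenvectors of `σ` when `σ ω = ω²`; the factor `ω`
makes them `σ`-fixed. -/
def coords (ω x : F) : F × F :=
  (ω * (σ x + ω * x), ω * (ω * σ x + x))

theorem coords_mem {ω : F} (hσ : ∀ x, σ (σ x) = x) (hω : ω ^ 3 = 1) (hσω : σ ω = ω ^ 2)
    (x : F) : coords σ ω x ∈ {c | σ c = c} ×ˢ {c | σ c = c} := by
  constructor
  · change σ (ω * _) = ω * _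
    simp only [map_mul, map_add, hσ, hσω]
    linear_combination ω * σ x * hω
  · change σ (ω * _) = ω * _
    simp only [map_mul, map_add, hσ, hσω]
    linear_combination ω * x * hω

theorem coords_snd_sub_mul_fst {ω : F} (hω : ω ^ 3 = 1) (x : F) :
    (coords σ ω x).2 - ω * (coords σ ω x).1 = (ω - 1) * x := by
  simp only [coords]
  linear_combination -x * hω

theorem bijOn_coords {ω : F} (hσ : ∀ x, σ (σ x) = x) (hω3 : ω ^ 3 = 1) (hσω : σ ω = ω ^ 2)
    (hω : ω ^ 2 ≠ ω) : BijOn (coords σ ω) univ ({c | σ c = c} ×ˢ {c | σ c = c}) := by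
  have hω1 : ω - 1 ≠ 0 := sub_ne_zero.2 fun h => hω (by rw [h, one_pow])
  have hρ := bijOn_mul_sub_mul σ hσ (θ := ω) (hσω ▸ hω) one_ne_zero
  simp only [one_mul] at hρ
  refine ⟨fun x _ => coords_mem σ hσ hω3 hσω x, fun x _ y _ h => ?_, fun a ha => ?_⟩
  · simpa only [coords_snd_sub_mul_fst σ hω3, mul_right_inj' hω1] using
      congrArg (fun a : F × F => a.2 - ω * a.1) h
  · refine ⟨(ω - 1)⁻¹ * (a.2 - ω * a.1), trivial, hρ.injOn (coords_mem σ hσ hω3 hσω _) ha ?_⟩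
    simp only [coords_snd_sub_mul_fst σ hω3, mul_inv_cancel_left₀ hω1]

theorem coords_add (ω x y : F) : coords σ ω (x + y) = coords σ ω x + coords σ ω y := by
  ext <;> simp only [coords, map_add, Prod.fst_add, Prod.snd_add] <;> ring

theorem coords_mul {ω c : F} (hc : σ c = c) (x : F) :
    coords σ ω (c * x) = (c * (coords σ ω x).1, c * (coords σ ω x).2) := by
  simp only [coords, map_mul, hc, Prod.mk.injEq]
  constructor <;> ring

theorem coords_pow_sub {ω : F} (hω : ω ^ 3 = 1) (N : ℕ) (x : F) :
    ω ^ (2 * N) * ((coords σ ω x).2 ^ N - ω * (coords σ ω x).1 ^ N) =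
      -ω * (σ x + ω * x) ^ N + (ω * σ x + x) ^ N := by
  have h : ω ^ (2 * N) * ω ^ N = 1 := by
    rw [← pow_add, show 2 * N + N = 3 * N by ring, pow_mul, hω, one_pow]
  simp only [coords, mul_pow]
  linear_combination (-ω * (σ x + ω * x) ^ N + (ω * σ x + x) ^ N) * h

end Involution

theorem iterateFrobenius_iterateFrobenius {F : Type*} [Field F] [Fintype F] {p k : ℕ}
    [ExpChar F p] (hF : Fintype.card F = (p ^ k) ^ 2) (x : F) :
    iterateFrobenius F p k (iterateFrobenius F p k x) = x := by
  rw [iterateFrobenius_def, iterateFrobenius_def, ← pow_mul, ← sq, ← hF, FiniteField.pow_card]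

theorem pow_mul_eval_numeratorC₁_eq {F : Type*} [Field F] {p k : ℕ} [ExpChar F p] {Q R S : ℕ}
    (hQ : ∃ i, Q = p ^ i) (hR : ∃ i, R = p ^ i) (hS : ∃ i, S = p ^ i) {ω : F} (hω : ω ^ 3 = 1)
    (x : F) :
    x ^ (Q + R + S) * (numeratorC₁ ω Q R S).eval (x ^ (p ^ k - 1)) =
      ω ^ (2 * (Q + R + S)) * ((coords (iterateFrobenius F p k) ω x).2 ^ (Q + R + S) -
        ω * (coords (iterateFrobenius F p k) ω x).1 ^ (Q + R + S)) := by
  have hxq : x * x ^ (p ^ k - 1) = iterateFrobenius F p k x := by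
    rw [← pow_succ', Nat.sub_add_cancel (Nat.one_le_pow _ _ (expChar_pos F p)),
      iterateFrobenius_def]
  rw [pow_mul_eval_numeratorC₁ hQ hR hS, hxq, coords_pow_sub _ hω]

theorem injOn_pow_iff_coprime {F : Type*} [Field F] [Fintype F] {q N : ℕ} (hq0 : q ≠ 0)
    (hq : q - 1 ∣ Fintype.card F - 1) (hN : N ≠ 0) :
    InjOn (· ^ N) {x : F | x ^ q = x} ↔ N.Coprime (q - 1) := by
  classical
  have hq1 : q - 1 + 1 = q := Nat.sub_add_cancel (Nat.one_le_iff_ne_zero.2 hq0)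
  constructor
  · intro hinj
    by_contra hcop
    obtain ⟨ℓ, hℓ, hℓN⟩ := Nat.exists_prime_and_dvd hcop
    have := Fact.mk hℓ
    obtain ⟨c, hc⟩ := exists_prime_orderOf_dvd_card (G := Fˣ) ℓ
      (by rw [Fintype.card_units]; exact (hℓN.trans (Nat.gcd_dvd_right _ _)).trans hq)
    have hpow : ∀ n, ℓ ∣ n → (c : F) ^ n = 1 := fun n hn => by
      rw [← Units.val_pow_eq_pow_val, orderOf_dvd_iff_pow_eq_one.1 (hc ▸ hn), Units.val_one]
    have hcK : (c : F) ^ q = c := by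
      rw [← hq1, pow_succ, hpow _ (hℓN.trans (Nat.gcd_dvd_right _ _)), one_mul]
    have hc1 : (c : F) = 1 :=
      hinj hcK (one_pow q) ((hpow N (hℓN.trans (Nat.gcd_dvd_left _ _))).trans (one_pow N).symm)
    rw [Units.val_eq_one.1 hc1, orderOf_one] at hc
    exact hℓ.one_lt.ne hc
  · intro hcop x hx y hy (hxy : x ^ N = y ^ N)
    have hunit : ∀ z : F, z ^ q = z → z ≠ 0 → z ^ (q - 1) = 1 := fun z hz hz0 => by
      rw [← mul_left_inj' hz0, ← pow_succ, hq1, hz, one_mul]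
    by_cases hy0 : y = 0
    · subst hy0
      rwa [zero_pow hN, pow_eq_zero_iff hN] at hxy
    have hx0 : x ≠ 0 := by
      rintro rfl
      exact hy0 ((pow_eq_zero_iff hN).1 (hxy.symm.trans (zero_pow hN)))
    have hN1 : (x / y) ^ N = 1 := by rw [div_pow, hxy, div_self (pow_ne_zero N hy0)]
    have hq' : (x / y) ^ (q - 1) = 1 := by rw [div_pow, hunit x hx hx0, hunit y hy hy0, div_one]
    have := pow_gcd_eq_one.2 ⟨hN1, hq'⟩
    rwa [hcop.gcd_eq_one, pow_one, div_eq_one_iff_eq hy0] at this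

theorem injective_comp_iff_injOn {α β γ δ : Type*} {η : α → β} {g : β → γ} {ρ : γ → δ}
    {A : Set β} {B : Set γ} (hη : BijOn η univ A) (hg : MapsTo g A B) (hρ : InjOn ρ B) :
    Injective (ρ ∘ g ∘ η) ↔ InjOn g A := by
  rw [← injOn_univ, ← comp_assoc, hη.injOn.comp_iff, hη.image_eq]
  exact ⟨InjOn.of_comp, fun h => hρ.comp h hg⟩

theorem injOn_prodMap_self_iff {α β : Type*} {f : α → β} {s : Set α} (hs : s.Nonempty) :
    InjOn (fun a : α × α => (f a.1, f a.2)) (s ×ˢ s) ↔ InjOn f s := by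
  obtain ⟨z, hz⟩ := hs
  refine ⟨fun h x hx y hy hxy => ?_, fun h => h.prodMap h⟩
  exact (Prod.ext_iff.1 (h (mk_mem_prod hx hz) (mk_mem_prod hy hz) (by simp only [hxy]))).1

theorem bijective_comp_pow_iff_coprime {F : Type*} [Field F] [Fintype F] {q N : ℕ} (hq0 : q ≠ 0)
    (hq : q - 1 ∣ Fintype.card F - 1) (hN : N ≠ 0) {η : F → F × F} {ρ : F × F → F}
    (hη : BijOn η univ ({x | x ^ q = x} ×ˢ {x | x ^ q = x}))
    (hρ : InjOn ρ ({x | x ^ q = x} ×ˢ {x | x ^ q = x})) :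
    Bijective (ρ ∘ (fun a : F × F => (a.1 ^ N, a.2 ^ N)) ∘ η) ↔ N.Coprime (q - 1) := by
  have hg : MapsTo (fun a : F × F => (a.1 ^ N, a.2 ^ N)) ({x : F | x ^ q = x} ×ˢ {x | x ^ q = x})
      ({x | x ^ q = x} ×ˢ {x | x ^ q = x}) := fun a ⟨h₁, h₂⟩ =>
    ⟨(pow_right_comm _ _ _).trans (congrArg (· ^ N) h₁),
      (pow_right_comm _ _ _).trans (congrArg (· ^ N) h₂)⟩
  rw [← Finite.injective_iff_bijective, injective_comp_iff_injOn hη hg hρ]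
  exact (injOn_prodMap_self_iff (s := {x : F | x ^ q = x}) ⟨1, one_pow q⟩).trans
    (injOn_pow_iff_coprime hq0 hq hN)

end PermutationPolynomial

open PermutationPolynomial

theorem stmt19_general (p k q : ℕ) (hp : p.Prime) (hp3 : p ≠ 3)
    (hq : q = p ^ k) (hq3 : q % 3 = 2)
    (F : Type*) [Field F] [Fintype F] (hF : Fintype.card F = q ^ 2)
    (ω : F) (hω : orderOf ω = 3)
    (Q R S : ℕ) (hQ : ∃ i : ℕ, Q = p ^ i) (hR : ∃ i : ℕ, R = p ^ i)
    (hS : ∃ i : ℕ, S = p ^ i)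
    (C₁ : Polynomial F)
    (hC₁ : C₁ =
      -(C ω) * ((X ^ Q + C (ω ^ Q)) * (X ^ R + C (ω ^ R)) * (X ^ S + C (ω ^ S)))
        + (C (ω ^ Q) * X ^ Q + 1) * (C (ω ^ R) * X ^ R + 1) *
          (C (ω ^ S) * X ^ S + 1))
    (β : F)
    (hβ : β = if (Q + R + S) % 3 = 1 then ω ^ (Q + R) - ω ^ (S + 1)
      else ω ^ (Q + R + S) - ω) :
    (∃ η : F → F × F, ∃ ρ : F × F → F,
        Function.Injective η ∧
        Set.range η = {a : F × F | a.1 ^ q = a.1 ∧ a.2 ^ q = a.2} ∧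
        (∀ x y : F, η (x + y) = η x + η y) ∧
        (∀ c x : F, c ^ q = c → η (c * x) = (c * (η x).1, c * (η x).2)) ∧
        Set.BijOn ρ {a : F × F | a.1 ^ q = a.1 ∧ a.2 ^ q = a.2} Set.univ ∧
        (∀ a b : F × F, ρ (a + b) = ρ a + ρ b) ∧
        (∀ (c : F) (a : F × F), c ^ q = c → ρ (c * a.1, c * a.2) = c * ρ a) ∧
        (∀ x : F,
          x ^ (Q + R + S) * (β⁻¹ * C₁.eval (x ^ (q - 1))) =
            ρ ((η x).1 ^ (Q + R + S), (η x).2 ^ (Q + R + S)))) ∧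
      (Function.Bijective
          (fun x : F => x ^ (Q + R + S) * (β⁻¹ * C₁.eval (x ^ (q - 1)))) ↔
        Nat.gcd (Q + R + S) (q - 1) = 1) := by
  subst hq
  have := Fact.mk hp
  have : CharP F p := charP_of_card_eq_prime_pow (f := k * 2) (by rw [hF, pow_mul])
  set σ := iterateFrobenius F p k
  have hσ := iterateFrobenius_iterateFrobenius hF
  have hω3 : ω ^ 3 = 1 := hω ▸ pow_orderOf_eq_one ω
  have hω2 := sq_ne_self_of_orderOf_eq_three hω
  have hσω : σ ω = ω ^ 2 := pow_eq_sq_of_orderOf_eq_three hω hq3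
  set N := Q + R + S
  have hN : N ≠ 0 := by
    obtain ⟨i, rfl⟩ := hQ
    have := pow_pos hp.pos i
    omega
  have hγ : β⁻¹ * ω ^ (2 * N) ≠ 0 :=
    mul_ne_zero (inv_ne_zero (hβ ▸ ite_pow_sub_pow_ne_zero hω
      (hS.elim fun i hi => hi ▸ three_not_dvd_pow hp hp3 i)))
      (pow_ne_zero _ (by rintro rfl; norm_num at hω3))
  have hη := bijOn_coords σ hσ hω3 hσω hω2
  have hρ := bijOn_mul_sub_mul σ hσ (hσω ▸ hω2) hγ
  have hf (x : F) : x ^ N * (β⁻¹ * C₁.eval (x ^ (p ^ k - 1))) =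
      β⁻¹ * ω ^ (2 * N) * ((coords σ ω x).2 ^ N - ω * (coords σ ω x).1 ^ N) := by
    rw [hC₁, mul_left_comm, ← numeratorC₁, pow_mul_eval_numeratorC₁_eq hQ hR hS hω3, mul_assoc]
  refine ⟨⟨coords σ ω, _, injOn_univ.1 hη.injOn, by rw [← image_univ, hη.image_eq]; rfl,
    coords_add σ ω, fun c x hc => coords_mul σ hc x, hρ,
    fun a b => by simp only [Prod.fst_add, Prod.snd_add]; ring, fun c a _ => by ring, hf⟩, ?_⟩
  rw [funext hf]
  exact bijective_comp_pow_iff_coprime (pow_ne_zero _ hp.ne_zero)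
    (by rw [hF]; exact Nat.sub_one_dvd_pow_sub_one _ _) hN hη hρ.injOn

/-- Statement 19: for `q ≡ 2 (mod 3)`, the polynomial
`f(X) = X^{Q+R+S} B₁(X^{q-1})` of Theorem 1 (with `B₁ = C₁/β`) is
`F_q`-linearly equivalent to `(x,y) ↦ (x^{Q+R+S}, y^{Q+R+S})` on
`F_q × F_q`; consequently `f` permutes `F_{q^2}` iff
`gcd(Q+R+S, q-1) = 1`. Here `F_q = {c : F | c^q = c}` and an
`F_q`-isomorphism is encoded as a bijective additive `F_q`-homogeneous map. -/
theorem stmt19 (p k q : ℕ) (hp : p.Prime) (hp3 : p ≠ 3) (hk : 0 < k)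
    (hq : q = p ^ k) (hq3 : q % 3 = 2)
    (F : Type*) [Field F] [Fintype F] (hF : Fintype.card F = q ^ 2)
    (ω : F) (hω : orderOf ω = 3)
    (Q R S : ℕ) (hQ : ∃ i : ℕ, Q = p ^ i) (hR : ∃ i : ℕ, R = p ^ i)
    (hS : ∃ i : ℕ, S = p ^ i)
    (C₁ : Polynomial F)
    (hC₁ : C₁ =
      -(C ω) * ((X ^ Q + C (ω ^ Q)) * (X ^ R + C (ω ^ R)) * (X ^ S + C (ω ^ S)))
        + (C (ω ^ Q) * X ^ Q + 1) * (C (ω ^ R) * X ^ R + 1) *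
          (C (ω ^ S) * X ^ S + 1))
    (β : F)
    (hβ : β = if (Q + R + S) % 3 = 1 then ω ^ (Q + R) - ω ^ (S + 1)
      else ω ^ (Q + R + S) - ω) :
    (∃ η : F → F × F, ∃ ρ : F × F → F,
        Function.Injective η ∧
        Set.range η = {a : F × F | a.1 ^ q = a.1 ∧ a.2 ^ q = a.2} ∧
        (∀ x y : F, η (x + y) = η x + η y) ∧
        (∀ c x : F, c ^ q = c → η (c * x) = (c * (η x).1, c * (η x).2)) ∧
        Set.BijOn ρ {a : F × F | a.1 ^ q = a.1 ∧ a.2 ^ q = a.2} Set.univ ∧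
        (∀ a b : F × F, ρ (a + b) = ρ a + ρ b) ∧
        (∀ (c : F) (a : F × F), c ^ q = c → ρ (c * a.1, c * a.2) = c * ρ a) ∧
        (∀ x : F,
          x ^ (Q + R + S) * (β⁻¹ * C₁.eval (x ^ (q - 1))) =
            ρ ((η x).1 ^ (Q + R + S), (η x).2 ^ (Q + R + S)))) ∧
      (Function.Bijective
          (fun x : F => x ^ (Q + R + S) * (β⁻¹ * C₁.eval (x ^ (q - 1)))) ↔
        Nat.gcd (Q + R + S) (q - 1) = 1) :=
  stmt19_general p k q hp hp3 hq hq3 F hF ω hω Q R S hQ hR hS C₁ hC₁ β hβ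
end
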